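/- arXiv:1008.4878 — 6 statements merged into one kernel-verified Lean document; each statement's English description precedes it below -/
import Mathlib

section
/- Let (G,j,π) be an iterated extension of (KNP) by (PQR) with mod-K outer action Θ, set i := j∘i₀ and φ := φ̄∘π, fix a section ū : R → Q of φ̄ with ū(1) = 1 and a map Δ : R → Aut_K(N) with Δ(1) = id whose composite with the quotient Aut_K(N) → Out(N;K) equals Θ∘ū. Then there exists a section u : R → G of φ with u(1) = 1 such that π∘u = ū and 𝒞_N^G∘u = Δ (so that (G,j,π,u) is a (ū,Δ)-sectioned iterated extension). Moreover, for any map c : R → Z(K)^P with c(1) = 1, the map r ↦ i(c(r))·u(r) is again such a section, and every section with these properties arises from u in this way. -/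
/-! Conjugation by any `g ∈ G` over `ū r` is an automorphism of `N` whose class in `Out(N;K)` is
`Θ (ū r) = [Δ r]`, so `Δ r = 𝒞(g) ∘ 𝒞(i₀ k)` for some `k`, and `g · i(k)` induces exactly `Δ r`.
Two lifts of `ū r` differ by an element `i(k)` of `ker π`; they induce the same automorphism of
`N` iff `i₀ k` centralizes `N`. Since `i₀` is injective such a `k` is central in `K`, and since
`P` acts on `Z(K)` through conjugation by `N`, centralizing `N` is the same as being `P`-fixed. -/

namespace IES

section OutDef

variable (K : Type*) [Group K]

/-- The subgroup of inner automorphisms of `K` inside `MulAut K`. -/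
def Inn : Subgroup (MulAut K) := (MulAut.conj : K →* MulAut K).range

instance : (Inn K).Normal := by
  constructor
  rintro x ⟨k, rfl⟩ η
  refine ⟨η k, ?_⟩
  ext y
  simp [MulAut.conj_apply, MulAut.mul_apply, map_mul, map_inv]

/-- The outer automorphism group `Out K := Aut K / Inn K`. -/
abbrev Out := MulAut K ⧸ Inn K

/-- Canonical projection `Aut K → Out K`. -/
def toOut : MulAut K →* Out K := QuotientGroup.mk' (Inn K)

lemma center_map (η : K ≃* K) {z : K} (hz : z ∈ Subgroup.center K) :
    η z ∈ Subgroup.center K := by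
  rw [Subgroup.mem_center_iff] at hz ⊢
  intro g
  calc g * η z = η (η.symm g * z) := by rw [map_mul, η.apply_symm_apply]
    _ = η (z * η.symm g) := by rw [hz (η.symm g)]
    _ = η z * g := by rw [map_mul, η.apply_symm_apply]

/-- Restriction of automorphisms of `K` to its center. -/
def centerAut : MulAut K →* MulAut (Subgroup.center K) where
  toFun η :=
    { toFun := fun z => ⟨η z.1, center_map K η z.2⟩
      invFun := fun z => ⟨η.symm z.1, center_map K η.symm z.2⟩
      left_inv := fun z => Subtype.ext (η.symm_apply_apply z.1)
      right_inv := fun z => Subtype.ext (η.apply_symm_apply z.1)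
      map_mul' := fun a b => Subtype.ext (map_mul η a.1 b.1) }
  map_one' := by ext z; rfl
  map_mul' := fun a b => by ext z; rfl

lemma centerAut_inn : ∀ x ∈ Inn K, centerAut K x = 1 := by
  rintro x ⟨k, rfl⟩
  ext z
  have hz := z.2
  rw [Subgroup.mem_center_iff] at hz
  show k * z.1 * k⁻¹ = z.1
  rw [hz k, mul_inv_cancel_right]

/-- The action of `Out K` on the center of `K`. -/
def outCenter : Out K →* MulAut (Subgroup.center K) :=
  QuotientGroup.lift (Inn K) (centerAut K) (centerAut_inn K)

end OutDef

section ModK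

variable {K N : Type*} [Group K] [Group N]

/-- The group of automorphisms of `N` stabilizing the image of `K`. -/
def autK (i0 : K →* N) : Subgroup (MulAut N) where
  carrier := {η | ∀ n, η n ∈ i0.range ↔ n ∈ i0.range}
  one_mem' := by intro n; rw [MulAut.one_apply]
  mul_mem' := by
    intro a b ha hb n
    rw [MulAut.mul_apply]
    exact (ha (b n)).trans (hb n)
  inv_mem' := by
    intro a ha n
    have h := ha (a⁻¹ n)
    rw [MulAut.apply_inv_self] at h
    exact h.symm

lemma mem_autK_iff {i0 : K →* N} {η : MulAut N} :
    η ∈ autK i0 ↔ ∀ n, η n ∈ i0.range ↔ n ∈ i0.range := Iff.rfl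

/-- The subgroup of `autK i0` of inner automorphisms induced by elements of `i0 K`. -/
def cInn (i0 : K →* N) : Subgroup (autK i0) where
  carrier := {η | ∃ k : K, (η : MulAut N) = MulAut.conj (i0 k)}
  one_mem' := ⟨1, by simp⟩
  mul_mem' := by
    rintro a b ⟨k1, h1⟩ ⟨k2, h2⟩
    exact ⟨k1 * k2, by rw [Subgroup.coe_mul, h1, h2, ← map_mul, ← map_mul]⟩
  inv_mem' := by
    rintro a ⟨k, h⟩
    exact ⟨k⁻¹, by rw [Subgroup.coe_inv, h, ← map_inv, ← map_inv]⟩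

lemma conj_conj_eq (η : MulAut N) (x : N) :
    η * MulAut.conj x * η⁻¹ = MulAut.conj (η x) := by
  ext y
  simp [MulAut.conj_apply, MulAut.mul_apply, map_mul, map_inv]

instance (i0 : K →* N) : (cInn i0).Normal := by
  constructor
  rintro c ⟨k, hk⟩ g
  obtain ⟨k', hk'⟩ := (g.2 (i0 k)).mpr ⟨k, rfl⟩
  refine ⟨k', ?_⟩
  rw [Subgroup.coe_mul, Subgroup.coe_mul, Subgroup.coe_inv, hk, conj_conj_eq, hk']

/-- The mod-`K` outer automorphism group `Out(N;K)`. -/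
abbrev OutNK (i0 : K →* N) := ↥(autK i0) ⧸ cInn i0

/-- Canonical projection onto the mod-`K` outer automorphism group. -/
def mkNK (i0 : K →* N) : ↥(autK i0) →* OutNK i0 := QuotientGroup.mk' (cInn i0)

end ModK


section Cocycles

variable {K P Q R : Type*} [Group K] [Group P] [Group Q] [Group R]

/-- Normalized 1-cocycles of `Q` with values in `Z(K)`, for the action induced by `θ`. -/
def IsZ1Q (θ : Q →* Out K) (lam : Q → ↥(Subgroup.center K)) : Prop :=
  lam 1 = 1 ∧ ∀ q1 q2 : Q, lam (q1 * q2) = lam q1 * outCenter K (θ q1) (lam q2)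

/-- Normalized 1-cocycles of `P` with values in `Z(K)`, for the action induced by `θ ∘ j̄`. -/
def IsZ1P (θ : Q →* Out K) (jb : P →* Q) (lam : P → ↥(Subgroup.center K)) : Prop :=
  lam 1 = 1 ∧ ∀ p1 p2 : P, lam (p1 * p2) = lam p1 * outCenter K (θ (jb p1)) (lam p2)

/-- Normalized 1-cocycles of `R` with values in `Z(K)^P`, where the action `θ₀` of `R`
is expressed via arbitrary `φ̄`-preimages in `Q`. -/
def IsZ1R (θ : Q →* Out K) (jb : P →* Q) (fb : Q →* R)
    (lam : R → ↥(Subgroup.center K)) : Prop :=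
  lam 1 = 1 ∧
  (∀ (r : R) (p : P), outCenter K (θ (jb p)) (lam r) = lam r) ∧
  ∀ q1 q2 : Q, lam (fb q1 * fb q2) = lam (fb q1) * outCenter K (θ q1) (lam (fb q2))

/-- Normalized 2-cocycles of `R` with values in `Z(K)^P`. -/
def IsZ2R (θ : Q →* Out K) (jb : P →* Q) (fb : Q →* R)
    (d : R → R → ↥(Subgroup.center K)) : Prop :=
  (∀ r : R, d 1 r = 1 ∧ d r 1 = 1) ∧
  (∀ (r1 r2 : R) (p : P), outCenter K (θ (jb p)) (d r1 r2) = d r1 r2) ∧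
  ∀ (q1 : Q) (r2 r3 : R),
    d (fb q1) r2 * d (fb q1 * r2) r3 = outCenter K (θ q1) (d r2 r3) * d (fb q1) (r2 * r3)

/-- The cohomology class of a 1-cocycle of `P` is fixed by the `R`-action. -/
def RFixed (θ : Q →* Out K) (jb : P →* Q) (lam : P → ↥(Subgroup.center K)) : Prop :=
  ∀ q : Q, ∃ z0 : ↥(Subgroup.center K), ∀ p p' : P,
    jb p' = q⁻¹ * jb p * q →
      outCenter K (θ q) (lam p') = z0⁻¹ * outCenter K (θ (jb p)) z0 * lam p

end Cocycles


section IteratedExtension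

open Function

variable {K N G Q : Type*} [Group K] [Group N] [Group G] [Group Q]

lemma range_eq_ker_comp_of_injective {i0 : K →* N} {j : N →* G} {π : G →* Q}
    (hj : Injective j) (hkerπ : (j.comp i0).range = π.ker) :
    i0.range = (π.comp j).ker := by
  ext n
  rw [MonoidHom.mem_ker, MonoidHom.comp_apply, ← MonoidHom.mem_ker, ← hkerπ,
    MonoidHom.range_comp, Subgroup.mem_map_iff_mem hj]

lemma exists_mulAut_conj_of_normal {f : K →* N} (hf : Injective f) (hn : f.range.Normal)
    (n : N) : ∃ σ : MulAut K, ∀ k, f (σ k) = n * f k * n⁻¹ := by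
  let e : K ≃* f.range := MonoidHom.ofInjective hf
  refine ⟨(e.trans (MulAut.conjNormal n)).trans e.symm, fun k => ?_⟩
  have he : ∀ x, f (e.symm x) = x := fun x => by
    rw [← MonoidHom.ofInjective_apply hf, MulEquiv.apply_symm_apply]
  simp only [MulEquiv.trans_apply, he, MulAut.conjNormal_apply, e, MonoidHom.ofInjective_apply]

lemma mem_autK_of_conj {i0 : K →* N} {j : N →* G} {π : G →* Q}
    (hker : i0.range = (π.comp j).ker) {g : G} {ν : MulAut N}
    (hν : ∀ n, j (ν n) = g * j n * g⁻¹) : ν ∈ autK i0 := by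
  intro n
  rw [hker, MonoidHom.mem_ker, MonoidHom.mem_ker, MonoidHom.comp_apply, MonoidHom.comp_apply,
    hν, map_mul, map_mul, map_inv, mul_inv_eq_one, mul_eq_left]

lemma exists_eq_mul_of_map_eq {f : K →* G} {π : G →* Q} (hker : f.range = π.ker)
    {g g' : G} (h : π g' = π g) : ∃ k, g' = f k * g := by
  obtain ⟨k, hk⟩ : g' * g⁻¹ ∈ f.range := by
    rw [hker, MonoidHom.mem_ker, map_mul, map_inv, h, mul_inv_cancel]
  exact ⟨k, by rw [hk, inv_mul_cancel_right]⟩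

lemma conj_mul_eq_iff_commute {j : N →* G} (hj : Injective j) {δ : MulAut N} {g : G}
    (hg : ∀ n, j (δ n) = g * j n * g⁻¹) (x : N) :
    (∀ n, j (δ n) = (j x * g) * j n * (j x * g)⁻¹) ↔ ∀ m, Commute x m := by
  have key : ∀ n, (j x * g) * j n * (j x * g)⁻¹ = j (x * δ n * x⁻¹) := fun n => by
    rw [map_mul, map_mul, map_inv, hg]; group
  simp only [key, hj.eq_iff]
  conv_rhs => rw [δ.surjective.forall]
  exact forall_congr' fun n => by rw [eq_comm, mul_inv_eq_iff_eq_mul, commute_iff_eq]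

variable {P R : Type*} [Group P] [Group R] {i0 : K →* N} {π0 : N →* P} {jb : P →* Q}
  {j : N →* G} {π : G →* Q}

lemma forall_outCenter_eq_iff_forall_commute {θ : Q →* Out K} (hi0 : Injective i0)
    (hπ0 : Surjective π0) (hj : Injective j) (hkerπ : (j.comp i0).range = π.ker)
    (hcomm : π.comp j = jb.comp π0)
    (hθ : ∀ (g : G) (κ : MulAut K),
      (∀ k, (j.comp i0) (κ k) = g * (j.comp i0) k * g⁻¹) → θ (π g) = toOut K κ)
    (z : Subgroup.center K) :
    (∀ p, outCenter K (θ (jb p)) z = z) ↔ ∀ n, Commute (i0 z) n := by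
  have hnormal : i0.range.Normal := by
    rw [range_eq_ker_comp_of_injective hj hkerπ]; infer_instance
  rw [hπ0.forall]
  refine forall_congr' fun n => ?_
  obtain ⟨κ, hκ⟩ := exists_mulAut_conj_of_normal hi0 hnormal n
  have hθn : θ (jb (π0 n)) = toOut K κ := by
    rw [← MonoidHom.comp_apply jb, ← hcomm, MonoidHom.comp_apply]
    exact hθ (j n) κ fun k => by simp only [MonoidHom.comp_apply, hκ, map_mul, map_inv]
  rw [hθn, Subtype.ext_iff, ← hi0.eq_iff]
  change i0 (κ z) = i0 z ↔ _
  rw [hκ, mul_inv_eq_iff_eq_mul, commute_iff_eq, eq_comm]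

lemma exists_lift_conj_eq {fb : Q →* R} {Θ : Q →* OutNK i0} (hj : Injective j)
    (hπ : Surjective π) (hkerφ : j.range = (fb.comp π).ker) (hkerπ : (j.comp i0).range = π.ker)
    (hΘ : ∀ (g : G) (ν : ↥(autK i0)),
      (∀ n : N, j ((ν : MulAut N) n) = g * j n * g⁻¹) → Θ (π g) = mkNK i0 ν)
    {q : Q} {δ : autK i0} (hδ : mkNK i0 δ = Θ q) :
    ∃ g : G, π g = q ∧ ∀ n, j ((δ : MulAut N) n) = g * j n * g⁻¹ := by
  obtain ⟨g0, rfl⟩ := hπ q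
  obtain ⟨ν, hν⟩ := exists_mulAut_conj_of_normal hj (hkerφ ▸ inferInstance) g0
  let νK : autK i0 := ⟨ν, mem_autK_of_conj (range_eq_ker_comp_of_injective hj hkerπ) hν⟩
  obtain ⟨k, hk⟩ : νK⁻¹ * δ ∈ cInn i0 := QuotientGroup.eq.mp (hδ.trans (hΘ g0 νK hν)).symm
  refine ⟨g0 * j (i0 k), ?_, fun n => ?_⟩
  · have hk1 : j (i0 k) ∈ π.ker := hkerπ ▸ ⟨k, rfl⟩
    rw [map_mul, MonoidHom.mem_ker.mp hk1, mul_one]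
  · have hδν : (δ : MulAut N) = ν * MulAut.conj (i0 k) := by
      rw [← hk, Subgroup.coe_mul, Subgroup.coe_inv, mul_inv_cancel_left]
    rw [hδν, MulAut.mul_apply, hν, MulAut.conj_apply]
    simp only [map_mul, map_inv]
    group

end IteratedExtension

theorem statement11_general
    {K P Q R N G : Type*} [Group K] [Group P] [Group Q] [Group R] [Group N] [Group G]
    (i0 : K →* N) (π0 : N →* P) (jb : P →* Q) (fb : Q →* R)
    (j : N →* G) (π : G →* Q) (θ : Q →* Out K)
    (hi0 : Function.Injective i0) (hπ0 : Function.Surjective π0)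
    (hj : Function.Injective j) (hπ : Function.Surjective π)
    (hcomm : π.comp j = jb.comp π0)
    (hkerφ : j.range = (fb.comp π).ker)
    (hkerπ : (j.comp i0).range = π.ker)
    (hθ : ∀ (g : G) (κ : MulAut K),
      (∀ k, (j.comp i0) (κ k) = g * (j.comp i0) k * g⁻¹) → θ (π g) = toOut K κ)
    -- Θ is the mod-K outer action of the iterated extension (G,j,π)
    (Θ : Q →* OutNK i0)
    (hΘ : ∀ (g : G) (ν : ↥(autK i0)),
      (∀ n : N, j ((ν : MulAut N) n) = g * j n * g⁻¹) → Θ (π g) = mkNK i0 ν)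
    -- a section ū of φ̄ and a lifting Δ of Θ∘ū
    (ub : R → Q) (hub1 : ub 1 = 1)
    (Δ : R → ↥(autK i0)) (hΔ1 : Δ 1 = 1)
    (hΔ : ∀ r : R, mkNK i0 (Δ r) = Θ (ub r)) :
    -- existence of a section u with π∘u = ū and 𝒞_N^G∘u = Δ
    (∃ u : R → G, (∀ r, π (u r) = ub r) ∧ u 1 = 1 ∧
      ∀ (r : R) (n : N), j ((Δ r : MulAut N) n) = u r * j n * (u r)⁻¹) ∧
    -- multiplying such a section by a map into Z(K)^P gives another one, and every
    -- such section arises this way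
    (∀ u : R → G, (∀ r, π (u r) = ub r) → u 1 = 1 →
      (∀ (r : R) (n : N), j ((Δ r : MulAut N) n) = u r * j n * (u r)⁻¹) →
      (∀ c : R → ↥(Subgroup.center K), c 1 = 1 →
        (∀ (r : R) (p : P), outCenter K (θ (jb p)) (c r) = c r) →
        (∀ r, π ((j.comp i0) (c r : K) * u r) = ub r) ∧
        (j.comp i0) (c 1 : K) * u 1 = 1 ∧
        (∀ (r : R) (n : N), j ((Δ r : MulAut N) n) =
          ((j.comp i0) (c r : K) * u r) * j n * ((j.comp i0) (c r : K) * u r)⁻¹)) ∧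
      (∀ u' : R → G, (∀ r, π (u' r) = ub r) → u' 1 = 1 →
        (∀ (r : R) (n : N), j ((Δ r : MulAut N) n) = u' r * j n * (u' r)⁻¹) →
        ∃ c : R → ↥(Subgroup.center K), c 1 = 1 ∧
          (∀ (r : R) (p : P), outCenter K (θ (jb p)) (c r) = c r) ∧
          ∀ r : R, u' r = (j.comp i0) (c r : K) * u r)) := by
  classical
  have hfixed := forall_outCenter_eq_iff_forall_commute hi0 hπ0 hj hkerπ hcomm hθ
  have hπji (k : K) : π (j (i0 k)) = 1 := MonoidHom.mem_ker.mp (hkerπ ▸ ⟨k, rfl⟩)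
  refine ⟨?_, fun u huπ hu1 huΔ => ⟨fun c hc1 hcP => ?_, fun u' hu'π hu'1 hu'Δ => ?_⟩⟩
  · choose g hgπ hgΔ using fun r => exists_lift_conj_eq hj hπ hkerφ hkerπ hΘ (hΔ r)
    refine ⟨fun r => if r = 1 then 1 else g r, fun r => ?_, if_pos rfl, fun r n => ?_⟩ <;>
      dsimp only <;> split_ifs with hr
    · rw [hr, hub1, map_one]
    · exact hgπ r
    · rw [hr, hΔ1]; simp
    · exact hgΔ r n
  · refine ⟨fun r => ?_, by simp [hc1, hu1],
      fun r => (conj_mul_eq_iff_commute hj (huΔ r) _).2 ((hfixed _).1 (hcP r))⟩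
    rw [MonoidHom.comp_apply, map_mul, hπji, one_mul, huπ]
  · choose d hd using fun r => exists_eq_mul_of_map_eq hkerπ ((hu'π r).trans (huπ r).symm)
    have hdN (r : R) : ∀ n, Commute (i0 (d r)) n :=
      (conj_mul_eq_iff_commute hj (huΔ r) _).1 (hd r ▸ hu'Δ r)
    have hdK (r : R) : d r ∈ Subgroup.center K := Subgroup.mem_center_iff.2 fun k =>
      hi0 (by rw [map_mul, map_mul, (hdN r (i0 k)).eq])
    refine ⟨fun r => ⟨d r, hdK r⟩, ?_, fun r => (hfixed _).2 (hdN r), hd⟩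
    have hd1 : j (i0 (d 1)) = j (i0 1) := by simpa [hu'1, hu1, eq_comm] using hd 1
    exact Subtype.ext (hi0 (hj hd1))

/-- Let `(G,j,π)` be an iterated extension with mod-`K` outer
action `Θ`, `ū` a section of `φ̄` and `Δ` a lifting of `Θ∘ū` to `Aut_K(N)`.  Then
there is a section `u` of `φ` with `π∘u = ū` and `𝒞_N^G∘u = Δ`; multiplying `u` by a
map `R → Z(K)^P` gives again such a section, and all such sections arise this way. -/
theorem statement11
    {K P Q R N G : Type*} [Group K] [Group P] [Group Q] [Group R] [Group N] [Group G]
    (i0 : K →* N) (π0 : N →* P) (jb : P →* Q) (fb : Q →* R)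
    (j : N →* G) (π : G →* Q) (θ : Q →* Out K)
    (hi0 : Function.Injective i0) (hπ0 : Function.Surjective π0)
    (hker0 : i0.range = π0.ker)
    (hjb : Function.Injective jb) (hfb : Function.Surjective fb)
    (hker1 : jb.range = fb.ker)
    (hj : Function.Injective j) (hπ : Function.Surjective π)
    (hcomm : π.comp j = jb.comp π0)
    (hkerφ : j.range = (fb.comp π).ker)
    (hkerπ : (j.comp i0).range = π.ker)
    (hθ : ∀ (g : G) (κ : MulAut K),
      (∀ k, (j.comp i0) (κ k) = g * (j.comp i0) k * g⁻¹) → θ (π g) = toOut K κ)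
    -- Θ is the mod-K outer action of the iterated extension (G,j,π)
    (Θ : Q →* OutNK i0)
    (hΘ : ∀ (g : G) (ν : ↥(autK i0)),
      (∀ n : N, j ((ν : MulAut N) n) = g * j n * g⁻¹) → Θ (π g) = mkNK i0 ν)
    -- a section ū of φ̄ and a lifting Δ of Θ∘ū
    (ub : R → Q) (hub : ∀ r, fb (ub r) = r) (hub1 : ub 1 = 1)
    (Δ : R → ↥(autK i0)) (hΔ1 : Δ 1 = 1)
    (hΔ : ∀ r : R, mkNK i0 (Δ r) = Θ (ub r)) :
    -- existence of a section u with π∘u = ū and 𝒞_N^G∘u = Δ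
    (∃ u : R → G, (∀ r, π (u r) = ub r) ∧ u 1 = 1 ∧
      ∀ (r : R) (n : N), j ((Δ r : MulAut N) n) = u r * j n * (u r)⁻¹) ∧
    -- multiplying such a section by a map into Z(K)^P gives another one, and every
    -- such section arises this way
    (∀ u : R → G, (∀ r, π (u r) = ub r) → u 1 = 1 →
      (∀ (r : R) (n : N), j ((Δ r : MulAut N) n) = u r * j n * (u r)⁻¹) →
      (∀ c : R → ↥(Subgroup.center K), c 1 = 1 →
        (∀ (r : R) (p : P), outCenter K (θ (jb p)) (c r) = c r) →
        (∀ r, π ((j.comp i0) (c r : K) * u r) = ub r) ∧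
        (j.comp i0) (c 1 : K) * u 1 = 1 ∧
        (∀ (r : R) (n : N), j ((Δ r : MulAut N) n) =
          ((j.comp i0) (c r : K) * u r) * j n * ((j.comp i0) (c r : K) * u r)⁻¹)) ∧
      (∀ u' : R → G, (∀ r, π (u' r) = ub r) → u' 1 = 1 →
        (∀ (r : R) (n : N), j ((Δ r : MulAut N) n) = u' r * j n * (u' r)⁻¹) →
        ∃ c : R → ↥(Subgroup.center K), c 1 = 1 ∧
          (∀ (r : R) (p : P), outCenter K (θ (jb p)) (c r) = c r) ∧
          ∀ r : R, u' r = (j.comp i0) (c r : K) * u r)) :=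
  statement11_general i0 π0 jb fb j π θ hi0 hπ0 hj hπ hcomm hkerφ hkerπ hθ Θ hΘ ub hub1 Δ hΔ1 hΔ

end IES
end

section
/- Let (G,j,π,u) be a (ū,Δ)-sectioned iterated extension of (KNP) by (PQR), with i := j∘i₀ and φ := φ̄∘π, and let d ∈ Z^2(R,Z(K)^P). Then the operation m_d(g₁,g₂) := i(d(φ(g₁),φ(g₂)))·g₁·g₂ on the underlying set of G is associative with identity element 1_G, and the m_d-inverse of g is i(θ₀(φ(g))⁻¹(d(φ(g),φ(g)⁻¹))⁻¹)·g⁻¹; denoting the resulting group by d⊠G, the maps j : N → d⊠G and π : d⊠G → Q are group homomorphisms, and (d⊠G,j,π,u) is again a (ū,Δ)-sectioned iterated extension of (KNP) by (PQR). -/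
/-!
The twisted product `m_d(g₁, g₂) = i(d(φ g₁, φ g₂)) g₁ g₂` differs from the product of `G` by a
factor in `i(Z(K))`, on which conjugation by `g` acts through `θ₀(φ g)`. Moving these factors past
elements of `G` turns associativity of `m_d` into the cocycle identity for `d`, and the
normalization of `d` makes `m_d` agree with the product of `G` as soon as one factor lies in
`j(N) = ker φ`; this gives the unit, the homomorphism property of `j` and the compatibility of `u`
with `Δ`.
-/

namespace IES

/-- The twisted multiplication `m_d` on `G` associated with a 2-cochain `d`. -/
def mD {K Q R N G : Type*} [Group K] [Group Q] [Group R] [Group N] [Group G]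
    (i0 : K →* N) (j : N →* G) (π : G →* Q) (fb : Q →* R)
    (d : R → R → ↥(Subgroup.center K)) (g1 g2 : G) : G :=
  (j.comp i0) (d (fb (π g1)) (fb (π g2)) : K) * g1 * g2

/-- The inversion map of the twisted multiplication `m_d`. -/
def vD {K Q R N G : Type*} [Group K] [Group Q] [Group R] [Group N] [Group G]
    (i0 : K →* N) (j : N →* G) (π : G →* Q) (fb : Q →* R) (θ : Q →* Out K)
    (d : R → R → ↥(Subgroup.center K)) (g : G) : G :=
  (j.comp i0) ((((outCenter K (θ (π g)))⁻¹ (d (fb (π g)) ((fb (π g))⁻¹)))⁻¹ : ↥(Subgroup.center K)) : K) * g⁻¹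

section TwistedMultiplication

variable {A G H R : Type*} [Group A] [Group G] [Group H] [Group R]
  (ι : A →* G) (φ : G →* R) (d : R → R → A)

def twistMul (g₁ g₂ : G) : G := ι (d (φ g₁) (φ g₂)) * g₁ * g₂

def twistInv (ρ : G → MulAut A) (g : G) : G := ι ((ρ g)⁻¹ (d (φ g) (φ g)⁻¹))⁻¹ * g⁻¹

variable {ι φ d}

lemma map_twistMul (ψ : G →* H) (hψ : ∀ a, ψ (ι a) = 1) (g₁ g₂ : G) :
    ψ (twistMul ι φ d g₁ g₂) = ψ g₁ * ψ g₂ := by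
  rw [twistMul, map_mul, map_mul, hψ, one_mul]

lemma twistMul_eq_mul_of_left (hd : ∀ r, d 1 r = 1) {g₁ : G} (h₁ : φ g₁ = 1) (g₂ : G) :
    twistMul ι φ d g₁ g₂ = g₁ * g₂ := by
  rw [twistMul, h₁, hd, map_one, one_mul]

lemma twistMul_eq_mul_of_right (hd : ∀ r, d r 1 = 1) (g₁ : G) {g₂ : G} (h₂ : φ g₂ = 1) :
    twistMul ι φ d g₁ g₂ = g₁ * g₂ := by
  rw [twistMul, h₂, hd, map_one, one_mul]

variable {ρ : G → MulAut A} (hρ : ∀ g a, g * ι a = ι (ρ g a) * g)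
  (hcoc : ∀ g r₂ r₃, d (φ g) r₂ * d (φ g * r₂) r₃ = ρ g (d r₂ r₃) * d (φ g) (r₂ * r₃))

lemma map_twistInv (hι : ∀ a, φ (ι a) = 1) (g : G) : φ (twistInv ι φ d ρ g) = (φ g)⁻¹ := by
  rw [twistInv, map_mul, hι, one_mul, map_inv]

include hρ in
lemma twistMul_twistInv (hι : ∀ a, φ (ι a) = 1) (g : G) :
    twistMul ι φ d g (twistInv ι φ d ρ g) = 1 := by
  have h : g * ι ((ρ g)⁻¹ (d (φ g) (φ g)⁻¹))⁻¹ = ι (d (φ g) (φ g)⁻¹)⁻¹ * g := by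
    rw [hρ, map_inv, MulAut.apply_inv_self]
  rw [twistMul, map_twistInv hι, twistInv, mul_assoc _ g, ← mul_assoc g, h, map_inv]
  group

include hcoc in
lemma inv_apply_cocycle_self_inv (hd₁ : ∀ r, d 1 r = 1) (hd₂ : ∀ r, d r 1 = 1) (g : G) :
    (ρ g)⁻¹ (d (φ g) (φ g)⁻¹) = d (φ g)⁻¹ (φ g) := by
  have h := hcoc g (φ g)⁻¹ (φ g)
  rw [mul_inv_cancel, inv_mul_cancel, hd₁, hd₂, mul_one, mul_one] at h
  rw [h, MulAut.inv_apply_self]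

include hcoc in
lemma twistInv_twistMul (hι : ∀ a, φ (ι a) = 1) (hd₁ : ∀ r, d 1 r = 1) (hd₂ : ∀ r, d r 1 = 1)
    (g : G) : twistMul ι φ d (twistInv ι φ d ρ g) g = 1 := by
  rw [twistMul, map_twistInv hι, twistInv, inv_apply_cocycle_self_inv hcoc hd₁ hd₂, map_inv]
  group

include hρ hcoc in
lemma twistMul_assoc [IsMulCommutative A] (hι : ∀ a, φ (ι a) = 1) (g₁ g₂ g₃ : G) :
    twistMul ι φ d (twistMul ι φ d g₁ g₂) g₃ = twistMul ι φ d g₁ (twistMul ι φ d g₂ g₃) := by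
  have hs : ∀ g g', φ (twistMul ι φ d g g') = φ g * φ g' := map_twistMul φ hι
  simp only [twistMul] at hs ⊢
  rw [hs, hs]
  calc ι (d (φ g₁ * φ g₂) (φ g₃)) * (ι (d (φ g₁) (φ g₂)) * g₁ * g₂) * g₃
      = ι (d (φ g₁) (φ g₂) * d (φ g₁ * φ g₂) (φ g₃)) * g₁ * g₂ * g₃ := by
        rw [mul_comm' (d (φ g₁) (φ g₂)), map_mul]; group
    _ = ι (d (φ g₁) (φ g₂ * φ g₃)) * (ι (ρ g₁ (d (φ g₂) (φ g₃))) * g₁) * g₂ * g₃ := by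
        rw [hcoc, mul_comm' (ρ g₁ _), map_mul]; group
    _ = ι (d (φ g₁) (φ g₂ * φ g₃)) * g₁ * (ι (d (φ g₂) (φ g₃)) * g₂ * g₃) := by
        rw [← hρ]; group

end TwistedMultiplication

section OuterAction

variable {K G : Type*} [Group K] [Group G] {i : K →* G}

lemma exists_mulAut_conj (hi : Function.Injective i) [i.range.Normal] (g : G) :
    ∃ κ : MulAut K, ∀ k, i (κ k) = g * i k * g⁻¹ := by
  refine ⟨(MonoidHom.ofInjective hi).trans
    ((MulAut.conjNormal g).trans (MonoidHom.ofInjective hi).symm), fun k => ?_⟩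
  rw [← MonoidHom.ofInjective_apply hi, MulEquiv.trans_apply, MulEquiv.trans_apply,
    MulEquiv.apply_symm_apply, MulAut.conjNormal_apply, MonoidHom.ofInjective_apply]

-- Inner automorphisms act trivially on the center, so the outer class of the conjugation
-- by `g` already determines it there.
lemma mul_center_eq_outCenter_mul (hi : Function.Injective i) [i.range.Normal]
    {τ : G → Out K} (hτ : ∀ g κ, (∀ k, i (κ k) = g * i k * g⁻¹) → τ g = toOut K κ)
    (g : G) (z : Subgroup.center K) : g * i z = i (outCenter K (τ g) z) * g := by
  obtain ⟨κ, hκ⟩ := exists_mulAut_conj hi g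
  rw [hτ g κ hκ]
  change g * i z = i (κ z) * g
  rw [hκ, inv_mul_cancel_right]

end OuterAction

theorem statement12_general
    {K P Q R N G : Type*} [Group K] [Group P] [Group Q] [Group R] [Group N] [Group G]
    (i0 : K →* N) (jb : P →* Q) (fb : Q →* R)
    (j : N →* G) (π : G →* Q) (θ : Q →* Out K)
    (hi0 : Function.Injective i0)
    (hj : Function.Injective j)
    (hkerφ : j.range = (fb.comp π).ker)
    (hkerπ : (j.comp i0).range = π.ker)
    (hθ : ∀ (g : G) (κ : MulAut K),
      (∀ k, (j.comp i0) (κ k) = g * (j.comp i0) k * g⁻¹) → θ (π g) = toOut K κ)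
    -- the (ū,Δ)-section u
    (Δ : R → ↥(autK i0))
    (u : R → G)
    (hconj : ∀ (r : R) (n : N), j ((Δ r : MulAut N) n) = u r * j n * (u r)⁻¹)
    -- a normalized 2-cocycle
    (d : R → R → ↥(Subgroup.center K)) (hd : IsZ2R θ jb fb d) :
    -- m_d is associative
    (∀ g1 g2 g3 : G, mD i0 j π fb d (mD i0 j π fb d g1 g2) g3 =
      mD i0 j π fb d g1 (mD i0 j π fb d g2 g3)) ∧
    -- 1 is a two-sided identity
    (∀ g : G, mD i0 j π fb d 1 g = g ∧ mD i0 j π fb d g 1 = g) ∧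
    -- v_d is a two-sided inverse
    (∀ g : G, mD i0 j π fb d g (vD i0 j π fb θ d g) = 1 ∧
      mD i0 j π fb d (vD i0 j π fb θ d g) g = 1) ∧
    -- j : N → d⊠G is a homomorphism
    (∀ n1 n2 : N, mD i0 j π fb d (j n1) (j n2) = j (n1 * n2)) ∧
    -- π : d⊠G → Q is a homomorphism
    (∀ g1 g2 : G, π (mD i0 j π fb d g1 g2) = π g1 * π g2) ∧
    -- the conjugation action of u r on N inside d⊠G is still Δ r, i.e.
    -- (d⊠G, j, π, u) is again a (ū,Δ)-sectioned iterated extension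
    (∀ (r : R) (n : N), mD i0 j π fb d (u r) (j n) =
      mD i0 j π fb d (j ((Δ r : MulAut N) n)) (u r)) := by
  let ι := (j.comp i0).comp (Subgroup.center K).subtype
  have hmD : mD i0 j π fb d = twistMul ι (fb.comp π) d := rfl
  have hvD : vD i0 j π fb θ d = twistInv ι (fb.comp π) d (fun g => outCenter K (θ (π g))) := rfl
  have : (j.comp i0).range.Normal := hkerπ ▸ π.normal_ker
  have hi : Function.Injective (j.comp i0) := hj.comp hi0
  have hπι (z) : π (ι z) = 1 := (hkerπ.le ⟨z, rfl⟩ :)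
  have hφι (z) : fb.comp π (ι z) = 1 := by simp [hπι]
  have hφj (n) : fb.comp π (j n) = 1 := (hkerφ.le ⟨n, rfl⟩ :)
  have hρ (g) (z) : g * ι z = ι (outCenter K (θ (π g)) z) * g :=
    mul_center_eq_outCenter_mul hi hθ g z
  obtain ⟨hd₀, -, hcocQ⟩ := hd
  have hcoc (g : G) := hcocQ (π g)
  have hd₁ (r) : d 1 r = 1 := (hd₀ r).1
  have hd₂ (r) : d r 1 = 1 := (hd₀ r).2
  rw [hmD, hvD]
  refine ⟨twistMul_assoc hρ hcoc hφι,
    fun g => ⟨(twistMul_eq_mul_of_left hd₁ (map_one _) g).trans (one_mul g),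
      (twistMul_eq_mul_of_right hd₂ g (map_one _)).trans (mul_one g)⟩,
    fun g => ⟨twistMul_twistInv hρ hφι g, twistInv_twistMul hcoc hφι hd₁ hd₂ g⟩,
    fun n₁ n₂ => (twistMul_eq_mul_of_left hd₁ (hφj n₁) _).trans (map_mul j n₁ n₂).symm,
    map_twistMul π hπι, fun r n => ?_⟩
  rw [twistMul_eq_mul_of_right hd₂ _ (hφj n), twistMul_eq_mul_of_left hd₁ (hφj _), hconj,
    inv_mul_cancel_right]

/-- For a `(ū,Δ)`-sectioned iterated extension `(G,j,π,u)` and a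
2-cocycle `d ∈ Z²(R,Z(K)^P)`, the twisted multiplication `m_d` makes the underlying
set of `G` into a group `d⊠G` with identity `1`, inversion `v_d`; `j` and `π` are
again homomorphisms and `(d⊠G,j,π,u)` is again a `(ū,Δ)`-sectioned iterated
extension. -/
theorem statement12
    {K P Q R N G : Type*} [Group K] [Group P] [Group Q] [Group R] [Group N] [Group G]
    (i0 : K →* N) (π0 : N →* P) (jb : P →* Q) (fb : Q →* R)
    (j : N →* G) (π : G →* Q) (θ : Q →* Out K)
    (hi0 : Function.Injective i0) (hπ0 : Function.Surjective π0)
    (hker0 : i0.range = π0.ker)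
    (hjb : Function.Injective jb) (hfb : Function.Surjective fb)
    (hker1 : jb.range = fb.ker)
    (hj : Function.Injective j) (hπ : Function.Surjective π)
    (hcomm : π.comp j = jb.comp π0)
    (hkerφ : j.range = (fb.comp π).ker)
    (hkerπ : (j.comp i0).range = π.ker)
    (hθ : ∀ (g : G) (κ : MulAut K),
      (∀ k, (j.comp i0) (κ k) = g * (j.comp i0) k * g⁻¹) → θ (π g) = toOut K κ)
    -- the (ū,Δ)-section u
    (ub : R → Q) (hub : ∀ r, fb (ub r) = r) (hub1 : ub 1 = 1)
    (Δ : R → ↥(autK i0)) (hΔ1 : Δ 1 = 1)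
    (u : R → G) (hπu : ∀ r, π (u r) = ub r) (hu1 : u 1 = 1)
    (hconj : ∀ (r : R) (n : N), j ((Δ r : MulAut N) n) = u r * j n * (u r)⁻¹)
    -- a normalized 2-cocycle
    (d : R → R → ↥(Subgroup.center K)) (hd : IsZ2R θ jb fb d) :
    -- m_d is associative
    (∀ g1 g2 g3 : G, mD i0 j π fb d (mD i0 j π fb d g1 g2) g3 =
      mD i0 j π fb d g1 (mD i0 j π fb d g2 g3)) ∧
    -- 1 is a two-sided identity
    (∀ g : G, mD i0 j π fb d 1 g = g ∧ mD i0 j π fb d g 1 = g) ∧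
    -- v_d is a two-sided inverse
    (∀ g : G, mD i0 j π fb d g (vD i0 j π fb θ d g) = 1 ∧
      mD i0 j π fb d (vD i0 j π fb θ d g) g = 1) ∧
    -- j : N → d⊠G is a homomorphism
    (∀ n1 n2 : N, mD i0 j π fb d (j n1) (j n2) = j (n1 * n2)) ∧
    -- π : d⊠G → Q is a homomorphism
    (∀ g1 g2 : G, π (mD i0 j π fb d g1 g2) = π g1 * π g2) ∧
    -- the conjugation action of u r on N inside d⊠G is still Δ r, i.e.
    -- (d⊠G, j, π, u) is again a (ū,Δ)-sectioned iterated extension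
    (∀ (r : R) (n : N), mD i0 j π fb d (u r) (j n) =
      mD i0 j π fb d (j ((Δ r : MulAut N) n)) (u r)) :=
  statement12_general i0 jb fb j π θ hi0 hj hkerφ hkerπ hθ Δ u hconj d hd

end IES
end

section
/- For ℓ = 1,2 let (G_ℓ,j_ℓ,π_ℓ,u_ℓ) be (ū,Δ)-sectioned iterated extensions of (KNP) by (PQR), and let f_ℓ : R×R → N be the left factor set characterized by u_ℓ(r₁)·u_ℓ(r₂) = j_ℓ(f_ℓ(r₁,r₂))·u_ℓ(r₁r₂) in G_ℓ for all r₁,r₂ ∈ R. Then the two (ū,Δ)-sectioned iterated extensions are isomorphic (i.e. there exists a group isomorphism ψ : G₁ → G₂ with ψ∘j₁ = j₂, π₂∘ψ = π₁ and ψ∘u₁ = u₂) if and only if f₁ = f₂ as maps R×R → N. -/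
open Function

namespace GroupExtension

variable {N E E' G : Type*} [Group N] [Group E] [Group E'] [Group G]
  {S : GroupExtension N E G} {S' : GroupExtension N E' G}

theorem conjAct_eq_iff {e : E} {α : MulAut N} :
    S.conjAct e = α ↔ ∀ n, S.inl (α n) = e * S.inl n * e⁻¹ := by
  refine ⟨fun h n => h ▸ S.inl_conjAct_comm, fun h => ?_⟩
  ext n
  exact S.inl_injective (by rw [S.inl_conjAct_comm, h])

namespace Section

variable (σ : S.Section)

def IsFactorSet (f : G → G → N) : Prop :=
  ∀ g₁ g₂, σ g₁ * σ g₂ = S.inl (f g₁ g₂) * σ (g₁ * g₂)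

variable {σ}

theorem IsFactorSet.unique {f f' : G → G → N} (hf : σ.IsFactorSet f)
    (hf' : σ.IsFactorSet f') : f = f' := by
  funext g₁ g₂
  exact S.inl_injective (mul_right_cancel ((hf g₁ g₂).symm.trans (hf' g₁ g₂)))

theorem IsFactorSet.apply_one {f : G → G → N} (hf : σ.IsFactorSet f) :
    σ 1 = S.inl (f 1 1) := by
  simpa using hf 1 1

theorem IsFactorSet.map {σ' : S'.Section} {f : G → G → N} (hf : σ.IsFactorSet f)
    (ψ : E →* E') (hinl : ∀ n, ψ (S.inl n) = S'.inl n) (hσ : ∀ g, ψ (σ g) = σ' g) :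
    σ'.IsFactorSet f := by
  intro g₁ g₂
  simpa only [map_mul, hinl, hσ] using congrArg ψ (hf g₁ g₂)

theorem IsFactorSet.inl_mul_mul_inl_mul {f : G → G → N} (hf : σ.IsFactorSet f)
    (a b : N) (g h : G) :
    S.inl a * σ g * (S.inl b * σ h) = S.inl (a * S.conjAct (σ g) b * f g h) * σ (g * h) := by
  calc S.inl a * σ g * (S.inl b * σ h)
      = S.inl a * (σ g * S.inl b * (σ g)⁻¹) * (σ g * σ h) := by group
    _ = S.inl (a * S.conjAct (σ g) b * f g h) * σ (g * h) := by
      rw [← S.inl_conjAct_comm, hf, S.inl.map_mul, S.inl.map_mul]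
      group

variable (σ)

theorem mul_inv_rightHom_mem_range_inl (e : E) : e * (σ (S.rightHom e))⁻¹ ∈ S.inl.range := by
  rw [S.range_inl_eq_ker_rightHom, MonoidHom.mem_ker, map_mul, map_inv, rightHom_section,
    mul_inv_cancel]

noncomputable def prodEquiv : N × G ≃ E where
  toFun p := S.inl p.1 * σ p.2
  invFun e := (invFun S.inl (e * (σ (S.rightHom e))⁻¹), S.rightHom e)
  left_inv := by
    rintro ⟨n, g⟩
    simp only [map_mul, rightHom_inl, rightHom_section, one_mul, mul_inv_cancel_right,
      leftInverse_invFun S.inl_injective n]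
  right_inv e := by
    simp only [invFun_eq (σ.mul_inv_rightHom_mem_range_inl e), inv_mul_cancel_right]

@[simp]
theorem prodEquiv_apply (n : N) (g : G) : σ.prodEquiv (n, g) = S.inl n * σ g := rfl

theorem hom_ext {H : Type*} [Group H] {φ φ' : E →* H} (hinl : ∀ n, φ (S.inl n) = φ' (S.inl n))
    (hσ : ∀ g, φ (σ g) = φ' (σ g)) : φ = φ' := by
  ext e
  obtain ⟨⟨n, g⟩, rfl⟩ := σ.prodEquiv.surjective e
  simp only [prodEquiv_apply, map_mul, hinl, hσ]

theorem exists_equiv_of_isFactorSet (σ' : S'.Section)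
    (hconj : ∀ g, S.conjAct (σ g) = S'.conjAct (σ' g)) {f : G → G → N}
    (hf : σ.IsFactorSet f) (hf' : σ'.IsFactorSet f) :
    ∃ ψ : S.Equiv S', ∀ g, ψ (σ g) = σ' g := by
  let ψ : E ≃ E' := σ.prodEquiv.symm.trans σ'.prodEquiv
  have hψ : ∀ n g, ψ (S.inl n * σ g) = S'.inl n * σ' g := fun n g => by
    rw [← prodEquiv_apply, ← prodEquiv_apply]
    exact congrArg σ'.prodEquiv (σ.prodEquiv.symm_apply_apply (n, g))
  have hψ_mul : ∀ x y, ψ (x * y) = ψ x * ψ y := by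
    intro x y
    obtain ⟨⟨a, g⟩, rfl⟩ := σ.prodEquiv.surjective x
    obtain ⟨⟨b, h⟩, rfl⟩ := σ.prodEquiv.surjective y
    simp only [prodEquiv_apply, hψ, hf.inl_mul_mul_inl_mul, hf'.inl_mul_mul_inl_mul, hconj]
  have hψ_inl : ∀ n, ψ (S.inl n) = S'.inl n := fun n => by
    simpa [hf.apply_one, hf'.apply_one] using hψ (n * (f 1 1)⁻¹) 1
  refine ⟨⟨⟨ψ, hψ_mul⟩, funext hψ_inl, funext fun e => ?_⟩, fun g => ?_⟩
  · obtain ⟨⟨n, g⟩, rfl⟩ := σ.prodEquiv.surjective e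
    simp [hψ]
  · show ψ (σ g) = σ' g
    simpa using hψ 1 g

end Section

end GroupExtension

namespace IES

open GroupExtension GroupExtension.Section

theorem statement13_general
    {K P Q R N G1 G2 : Type*} [Group K] [Group P] [Group Q] [Group R] [Group N]
    [Group G1] [Group G2]
    (i0 : K →* N) (π0 : N →* P) (jb : P →* Q) (fb : Q →* R)
    -- the fixed choices ū and Δ
    (ub : R → Q) (hub : ∀ r, fb (ub r) = r)
    (Δ : R → ↥(autK i0))
    -- the first sectioned iterated extension
    (j1 : N →* G1) (π1 : G1 →* Q)
    (hj1 : Function.Injective j1)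
    (hcomm1 : π1.comp j1 = jb.comp π0)
    (hkerφ1 : j1.range = (fb.comp π1).ker)
    (u1 : R → G1) (hπu1 : ∀ r, π1 (u1 r) = ub r)
    (hconj1 : ∀ (r : R) (n : N), j1 ((Δ r : MulAut N) n) = u1 r * j1 n * (u1 r)⁻¹)
    -- the second sectioned iterated extension
    (j2 : N →* G2) (π2 : G2 →* Q)
    (hj2 : Function.Injective j2)
    (hcomm2 : π2.comp j2 = jb.comp π0)
    (hkerφ2 : j2.range = (fb.comp π2).ker)
    (u2 : R → G2) (hπu2 : ∀ r, π2 (u2 r) = ub r)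
    (hconj2 : ∀ (r : R) (n : N), j2 ((Δ r : MulAut N) n) = u2 r * j2 n * (u2 r)⁻¹)
    -- the left factor sets
    (f1 : R → R → N)
    (hf1 : ∀ r1 r2 : R, u1 r1 * u1 r2 = j1 (f1 r1 r2) * u1 (r1 * r2))
    (f2 : R → R → N)
    (hf2 : ∀ r1 r2 : R, u2 r1 * u2 r2 = j2 (f2 r1 r2) * u2 (r1 * r2)) :
    (∃ ψ : G1 ≃* G2, (∀ n : N, ψ (j1 n) = j2 n) ∧ (∀ g : G1, π2 (ψ g) = π1 g) ∧
      ∀ r : R, ψ (u1 r) = u2 r) ↔ f1 = f2 := by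
  have hσ1 : RightInverse u1 (fb.comp π1) := fun r => by simp [hπu1, hub]
  have hσ2 : RightInverse u2 (fb.comp π2) := fun r => by simp [hπu2, hub]
  let S1 : GroupExtension N G1 R := ⟨j1, fb.comp π1, hj1, hkerφ1, hσ1.surjective⟩
  let S2 : GroupExtension N G2 R := ⟨j2, fb.comp π2, hj2, hkerφ2, hσ2.surjective⟩
  let σ1 : S1.Section := ⟨u1, hσ1⟩
  let σ2 : S2.Section := ⟨u2, hσ2⟩
  constructor
  · rintro ⟨ψ, hψj, -, hψu⟩
    exact IsFactorSet.unique (σ := σ2) (IsFactorSet.map (σ := σ1) hf1 ψ.toMonoidHom hψj hψu) hf2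
  · rintro rfl
    have hconj : ∀ r, S1.conjAct (σ1 r) = S2.conjAct (σ2 r) := fun r =>
      (conjAct_eq_iff.2 (hconj1 r)).trans (conjAct_eq_iff.2 (hconj2 r)).symm
    obtain ⟨ψ, hψu⟩ := σ1.exists_equiv_of_isFactorSet σ2 hconj hf1 hf2
    have hπ : π2.comp (ψ : G1 ≃* G2).toMonoidHom = π1 := by
      refine σ1.hom_ext (fun n => ?_) (fun r => ?_)
      · show π2 (ψ (S1.inl n)) = π1 (S1.inl n)
        rw [ψ.map_inl]
        exact (DFunLike.congr_fun hcomm2 n).trans (DFunLike.congr_fun hcomm1 n).symm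
      · simpa [S1, σ1, σ2, hπu1, hπu2] using congrArg π2 (hψu r)
    exact ⟨ψ, ψ.map_inl, fun g => DFunLike.congr_fun hπ g, hψu⟩

/-- Two `(ū,Δ)`-sectioned iterated extensions of `(KNP)` by `(PQR)`
are isomorphic iff their left factor sets coincide. -/
theorem statement13
    {K P Q R N G1 G2 : Type*} [Group K] [Group P] [Group Q] [Group R] [Group N]
    [Group G1] [Group G2]
    (i0 : K →* N) (π0 : N →* P) (jb : P →* Q) (fb : Q →* R)
    (hi0 : Function.Injective i0) (hπ0 : Function.Surjective π0)
    (hker0 : i0.range = π0.ker)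
    (hjb : Function.Injective jb) (hfb : Function.Surjective fb)
    (hker1 : jb.range = fb.ker)
    -- the fixed choices ū and Δ
    (ub : R → Q) (hub : ∀ r, fb (ub r) = r) (hub1 : ub 1 = 1)
    (Δ : R → ↥(autK i0)) (hΔ1 : Δ 1 = 1)
    -- the first sectioned iterated extension
    (j1 : N →* G1) (π1 : G1 →* Q)
    (hj1 : Function.Injective j1) (hπ1 : Function.Surjective π1)
    (hcomm1 : π1.comp j1 = jb.comp π0)
    (hkerφ1 : j1.range = (fb.comp π1).ker)
    (hkerπ1 : (j1.comp i0).range = π1.ker)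
    (u1 : R → G1) (hπu1 : ∀ r, π1 (u1 r) = ub r) (hu11 : u1 1 = 1)
    (hconj1 : ∀ (r : R) (n : N), j1 ((Δ r : MulAut N) n) = u1 r * j1 n * (u1 r)⁻¹)
    -- the second sectioned iterated extension
    (j2 : N →* G2) (π2 : G2 →* Q)
    (hj2 : Function.Injective j2) (hπ2 : Function.Surjective π2)
    (hcomm2 : π2.comp j2 = jb.comp π0)
    (hkerφ2 : j2.range = (fb.comp π2).ker)
    (hkerπ2 : (j2.comp i0).range = π2.ker)
    (u2 : R → G2) (hπu2 : ∀ r, π2 (u2 r) = ub r) (hu21 : u2 1 = 1)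
    (hconj2 : ∀ (r : R) (n : N), j2 ((Δ r : MulAut N) n) = u2 r * j2 n * (u2 r)⁻¹)
    -- the left factor sets
    (f1 : R → R → N)
    (hf1 : ∀ r1 r2 : R, u1 r1 * u1 r2 = j1 (f1 r1 r2) * u1 (r1 * r2))
    (f2 : R → R → N)
    (hf2 : ∀ r1 r2 : R, u2 r1 * u2 r2 = j2 (f2 r1 r2) * u2 (r1 * r2)) :
    (∃ ψ : G1 ≃* G2, (∀ n : N, ψ (j1 n) = j2 n) ∧ (∀ g : G1, π2 (ψ g) = π1 g) ∧
      ∀ r : R, ψ (u1 r) = u2 r) ↔ f1 = f2 :=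
  statement13_general i0 π0 jb fb ub hub Δ j1 π1 hj1 hcomm1 hkerφ1 u1 hπu1 hconj1 j2 π2 hj2 hcomm2
    hkerφ2 u2 hπu2 hconj2 f1 hf1 f2 hf2

end IES
end

section
/- Let (G,j,π) and (G',j',π') be iterated extensions of (KNP) by (PQR) with the same mod-K outer action Θ. Then the Q-main extensions (G,j∘i₀,π) and (G',j'∘i₀,π') are isomorphic as extensions of K by Q if and only if there exists η ∈ Aut(KNP) such that the iterated extensions (G,j∘η,π) and (G',j',π') are isomorphic. -/
/-!
An isomorphism `ψ` of the `Q`-main extensions commutes with the projections to `Q`, hence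
carries `j(N) = ker (φ̄ ∘ π)` onto `j'(N) = ker (φ̄ ∘ π')`. Transported back to `N` through
`j` and `j'` it becomes the automorphism `η`; it fixes `K` because `ψ` does, and it induces
the identity on `P` because `j̄` is injective and `ψ` lies over `Q`.
-/

namespace IES

section Transport

variable {N G G' H : Type*} [Group N] [Group G] [Group G'] [Group H]

lemma map_ker_eq_ker_of_comp_eq {φ : G →* H} {φ' : G' →* H} (ψ : G ≃* G')
    (h : ∀ g, φ' (ψ g) = φ g) : φ.ker.map ψ.toMonoidHom = φ'.ker := by
  ext g
  rw [Subgroup.mem_map_equiv, MonoidHom.mem_ker, MonoidHom.mem_ker, ← h, MulEquiv.apply_symm_apply]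

lemma exists_mulAut_comp_eq_of_range_eq {f f' : N →* G} (hf : Function.Injective f)
    (hf' : Function.Injective f') (h : f.range = f'.range) :
    ∃ e : MulAut N, ∀ n, f (e n) = f' n := by
  refine ⟨(MonoidHom.ofInjective hf').trans
    ((MulEquiv.subgroupCongr h.symm).trans (MonoidHom.ofInjective hf).symm), fun n => ?_⟩
  simpa using MonoidHom.ofInjective_apply hf'

end Transport

theorem statement17_general
    {K P Q R N G G' : Type*} [Group K] [Group P] [Group Q] [Group R] [Group N]
    [Group G] [Group G']
    (i0 : K →* N) (π0 : N →* P) (jb : P →* Q) (fb : Q →* R)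
    (hjb : Function.Injective jb)
    -- the first iterated extension (G,j,π)
    (j : N →* G) (π : G →* Q)
    (hj : Function.Injective j)
    (hcomm : π.comp j = jb.comp π0)
    (hkerφ : j.range = (fb.comp π).ker)
    -- the second iterated extension (G',j',π')
    (j' : N →* G') (π' : G' →* Q)
    (hj' : Function.Injective j')
    (hcomm' : π'.comp j' = jb.comp π0)
    (hkerφ' : j'.range = (fb.comp π').ker) :
    -- the Q-main extensions are isomorphic iff some twist of (G,j,π) is isomorphic
    -- to (G',j',π') as an iterated extension
    (∃ ψ : G ≃* G', (∀ k : K, ψ ((j.comp i0) k) = (j'.comp i0) k) ∧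
        ∀ g : G, π' (ψ g) = π g) ↔
    (∃ η : MulAut N, (∀ k : K, η (i0 k) = i0 k) ∧ (∀ n : N, π0 (η n) = π0 n) ∧
      ∃ ψ : G ≃* G', (∀ n : N, ψ (j (η n)) = j' n) ∧ ∀ g : G, π' (ψ g) = π g) := by
  constructor
  · rintro ⟨ψ, hψK, hψπ⟩
    have hrange : (ψ.toMonoidHom.comp j).range = j'.range := by
      rw [MonoidHom.range_comp, hkerφ, hkerφ']
      exact map_ker_eq_ker_of_comp_eq ψ fun g => congrArg fb (hψπ g)
    obtain ⟨η, hψj⟩ := exists_mulAut_comp_eq_of_range_eq (ψ.injective.comp hj) hj' hrange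
    replace hψj : ∀ n, ψ (j (η n)) = j' n := hψj
    refine ⟨η, fun k => ?_, fun n => hjb ?_, ψ, hψj, hψπ⟩
    · apply ψ.injective.comp hj
      exact (hψj (i0 k)).trans (hψK k).symm
    · calc jb (π0 (η n)) = π (j (η n)) := (DFunLike.congr_fun hcomm _).symm
        _ = π' (ψ (j (η n))) := (hψπ _).symm
        _ = π' (j' n) := by rw [hψj]
        _ = jb (π0 n) := DFunLike.congr_fun hcomm' n
  · rintro ⟨η, hηK, -, ψ, hψj, hψπ⟩
    exact ⟨ψ, fun k => by simpa [hηK] using hψj (i0 k), hψπ⟩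

/-- Two iterated extensions of `(KNP)` by `(PQR)` with the same
mod-`K` outer action `Θ` have isomorphic `Q`-main extensions iff one becomes
isomorphic to the other after twisting by some automorphism `η ∈ Aut(KNP)`. -/
theorem statement17
    {K P Q R N G G' : Type*} [Group K] [Group P] [Group Q] [Group R] [Group N]
    [Group G] [Group G']
    (i0 : K →* N) (π0 : N →* P) (jb : P →* Q) (fb : Q →* R)
    (hi0 : Function.Injective i0) (hπ0 : Function.Surjective π0)
    (hker0 : i0.range = π0.ker)
    (hjb : Function.Injective jb) (hfb : Function.Surjective fb)
    (hker1 : jb.range = fb.ker)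
    -- the first iterated extension (G,j,π)
    (j : N →* G) (π : G →* Q)
    (hj : Function.Injective j) (hπ : Function.Surjective π)
    (hcomm : π.comp j = jb.comp π0)
    (hkerφ : j.range = (fb.comp π).ker)
    (hkerπ : (j.comp i0).range = π.ker)
    -- the second iterated extension (G',j',π')
    (j' : N →* G') (π' : G' →* Q)
    (hj' : Function.Injective j') (hπ' : Function.Surjective π')
    (hcomm' : π'.comp j' = jb.comp π0)
    (hkerφ' : j'.range = (fb.comp π').ker)
    (hkerπ' : (j'.comp i0).range = π'.ker)
    -- both have the same mod-K outer action Θ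
    (Θ : Q →* OutNK i0)
    (hΘ : ∀ (g : G) (ν : ↥(autK i0)),
      (∀ n : N, j ((ν : MulAut N) n) = g * j n * g⁻¹) → Θ (π g) = mkNK i0 ν)
    (hΘ' : ∀ (g' : G') (ν : ↥(autK i0)),
      (∀ n : N, j' ((ν : MulAut N) n) = g' * j' n * g'⁻¹) → Θ (π' g') = mkNK i0 ν) :
    -- the Q-main extensions are isomorphic iff some twist of (G,j,π) is isomorphic
    -- to (G',j',π') as an iterated extension
    (∃ ψ : G ≃* G', (∀ k : K, ψ ((j.comp i0) k) = (j'.comp i0) k) ∧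
        ∀ g : G, π' (ψ g) = π g) ↔
    (∃ η : MulAut N, (∀ k : K, η (i0 k) = i0 k) ∧ (∀ n : N, π0 (η n) = π0 n) ∧
      ∃ ψ : G ≃* G', (∀ n : N, ψ (j (η n)) = j' n) ∧ ∀ g : G, π' (ψ g) = π g) :=
  statement17_general i0 π0 jb fb hjb j π hj hcomm hkerφ j' π' hj' hcomm' hkerφ'

end IES
end

section
/- Let (KNP) be an extension of K by P with outer action θ∘j̄ and mod-K outer action Θ_P, and let Θ : Q → Out(N;K) be a (θ,𝒞_P^Q)-prolongation of Θ_P. Identify H^1(P,Z(K)) with the subgroup Out(KNP;K) of Out(N;K) via the canonical isomorphism [λ] ↦ class of (n ↦ i₀(λ(π₀(n)))·n). Then the map Γ ↦ (q ↦ Γ(φ̄(q))·Θ(q)) is a well-defined bijection from Z^1(R,H^1(P,Z(K))) (normalized 1-cocycles for the R-action on H^1(P,Z(K))) onto the set of all (θ,𝒞_P^Q)-prolongations of Θ_P; its inverse sends a prolongation Θ' to the cocycle r ↦ Θ'(ū(r))·Θ(ū(r))⁻¹, for any section ū : R → Q of φ̄ with ū(1) = 1. -/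
/-!
Multiplying a class in `Out(N;K)` by an element of `Out(KNP;K)` changes neither the outer
automorphism of `K` nor the automorphism of `P` it induces; conversely, two classes inducing the
same pair differ by an element of `Out(KNP;K)`, as one sees by choosing representatives that
restrict to the same automorphism of `K`. So `Γ ⋄ Θ` is a prolongation, and for a prolongation
`Θ'` the quotient `q ↦ Θ'(q) Θ(q)⁻¹` lies in `Out(KNP;K)`; it only depends on `φ̄ q` because
`Θ` and `Θ'` agree on `j̄(P) = ker φ̄`, and the cocycle identity is then formal.
-/

namespace IES

section Prolongations

variable {K P Q R N : Type*} [Group K] [Group P] [Group Q] [Group R] [Group N]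

/-- Membership in `Out(KNP;K)`, the image of `Aut(KNP)` in `Out(N;K)`. -/
def MemOutKNP (i0 : K →* N) (π0 : N →* P) (x : OutNK i0) : Prop :=
  ∃ η : ↥(autK i0), (∀ k : K, (η : MulAut N) (i0 k) = i0 k) ∧
    (∀ n : N, π0 ((η : MulAut N) n) = π0 n) ∧ mkNK i0 η = x

/-- `Θ'` is a `(θ,𝒞_P^Q)`-prolongation of `Θ_P`: it extends `Θ_P`, induces `θ` on
`Out(K)`, and induces the conjugation action of `Q` on `P`. -/
def IsProlong (i0 : K →* N) (π0 : N →* P) (jb : P →* Q) (θ : Q →* Out K)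
    (ΘP : P →* OutNK i0) (Θ' : Q →* OutNK i0) : Prop :=
  (∀ p : P, Θ' (jb p) = ΘP p) ∧
  (∀ (q : Q) (ν : ↥(autK i0)) (κ : MulAut K), mkNK i0 ν = Θ' q →
    (∀ k, i0 (κ k) = (ν : MulAut N) (i0 k)) → θ q = toOut K κ) ∧
  (∀ (q : Q) (ν : ↥(autK i0)), mkNK i0 ν = Θ' q →
    ∀ n : N, jb (π0 ((ν : MulAut N) n)) = q * jb (π0 n) * q⁻¹)

end Prolongations

section TwistedCocycles

variable {Q R G : Type*} [Group Q] [Group R] [Group G]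

def cocycleTwist (Θ : Q →* G) (f : Q →* R) (Γ : R → G) (hΓ1 : Γ 1 = 1)
    (hΓ : ∀ q1 q2 : Q, Γ (f q1 * f q2) = Γ (f q1) * (Θ q1 * Γ (f q2) * (Θ q1)⁻¹)) : Q →* G where
  toFun q := Γ (f q) * Θ q
  map_one' := by simp only [map_one, hΓ1, one_mul]
  map_mul' q1 q2 := by simp only [map_mul, hΓ]; group

lemma exists_cocycle_of_eqOn_ker {f : Q →* R} (hf : Function.Surjective f) {Θ Θ' : Q →* G}
    (hker : ∀ q ∈ f.ker, Θ' q = Θ q) :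
    ∃ Γ : R → G, Γ 1 = 1 ∧
      (∀ q1 q2 : Q, Γ (f q1 * f q2) = Γ (f q1) * (Θ q1 * Γ (f q2) * (Θ q1)⁻¹)) ∧
      ∀ q, Θ' q = Γ (f q) * Θ q := by
  have hfiber : ∀ q, Θ' q * (Θ q)⁻¹ = Θ' (Function.surjInv hf (f q)) *
      (Θ (Function.surjInv hf (f q)))⁻¹ := by
    intro q
    have hmem : q⁻¹ * Function.surjInv hf (f q) ∈ f.ker := by
      rw [MonoidHom.mem_ker, map_mul, map_inv, Function.surjInv_eq hf, inv_mul_cancel]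
    have h := hker _ hmem
    rw [map_mul, map_mul, map_inv, map_inv, inv_mul_eq_iff_eq_mul] at h
    rw [h]
    group
  refine ⟨fun r => Θ' (Function.surjInv hf r) * (Θ (Function.surjInv hf r))⁻¹, ?_, ?_, ?_⟩
  · simpa using (hfiber 1).symm
  · intro q1 q2
    simp only [← map_mul f, ← hfiber, map_mul Θ, map_mul Θ']
    group
  · intro q
    simp only [← hfiber, inv_mul_cancel_right]

end TwistedCocycles

section Induced

variable {K P Q N : Type*} [Group K] [Group P] [Group Q] [Group N] {i0 : K →* N}

/-- The canonical map `Out(N;K) → Out(K)` sends `x` to `o`. -/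
def InducesOut (i0 : K →* N) (x : OutNK i0) (o : Out K) : Prop :=
  ∀ (ν : ↥(autK i0)) (κ : MulAut K), mkNK i0 ν = x →
    (∀ k, i0 (κ k) = (ν : MulAut N) (i0 k)) → o = toOut K κ

/-- The canonical map `Out(N;K) → Aut(P)` sends `x` to `𝒞_P^Q(q)`. -/
def InducesConj (i0 : K →* N) (π0 : N →* P) (jb : P →* Q) (x : OutNK i0) (q : Q) : Prop :=
  ∀ ν : ↥(autK i0), mkNK i0 ν = x → ∀ n : N, jb (π0 ((ν : MulAut N) n)) = q * jb (π0 n) * q⁻¹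

lemma isProlong_iff {π0 : N →* P} {jb : P →* Q} {θ : Q →* Out K} {ΘP : P →* OutNK i0}
    {Θ' : Q →* OutNK i0} :
    IsProlong i0 π0 jb θ ΘP Θ' ↔ (∀ p, Θ' (jb p) = ΘP p) ∧
      (∀ q, InducesOut i0 (Θ' q) (θ q)) ∧ ∀ q, InducesConj i0 π0 jb (Θ' q) q :=
  Iff.rfl

def innK (k : K) : ↥(autK i0) :=
  ⟨MulAut.conj (i0 k), mem_autK_iff.mpr fun n => by
    have hk : i0 k ∈ i0.range := ⟨k, rfl⟩
    rw [MulAut.conj_apply, Subgroup.mul_mem_cancel_right _ (inv_mem hk),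
      Subgroup.mul_mem_cancel_left _ hk]⟩

lemma mkNK_innK (k : K) : mkNK i0 (innK k) = 1 :=
  (QuotientGroup.eq_one_iff _).mpr ⟨k, rfl⟩

lemma exists_restrict (hi0 : Function.Injective i0) (ν : ↥(autK i0)) :
    ∃ κ : MulAut K, ∀ k, i0 (κ k) = (ν : MulAut N) (i0 k) := by
  have hrange : ∀ (μ : ↥(autK i0)) k, ∃ k', i0 k' = (μ : MulAut N) (i0 k) :=
    fun μ k => (μ.2 (i0 k)).mpr ⟨k, rfl⟩
  choose f hf using hrange ν
  choose g hg using hrange ν⁻¹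
  refine ⟨⟨⟨f, g, fun k => hi0 ?_, fun k => hi0 ?_⟩, fun a b => hi0 ?_⟩, hf⟩
  · rw [hg, hf, Subgroup.coe_inv, MulAut.inv_apply_self]
  · rw [hf, hg, Subgroup.coe_inv, MulAut.apply_inv_self]
  · rw [hf, map_mul, map_mul, map_mul, hf, hf]

lemma exists_mkNK_eq_of_inducesOut (hi0 : Function.Injective i0) {x : OutNK i0} {o : Out K}
    (hx : InducesOut i0 x o) {κ : MulAut K} (hκ : toOut K κ = o) :
    ∃ ν : ↥(autK i0), mkNK i0 ν = x ∧ ∀ k, i0 (κ k) = (ν : MulAut N) (i0 k) := by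
  obtain ⟨ν₀, rfl⟩ := QuotientGroup.mk'_surjective (cInn i0) x
  obtain ⟨κ₀, hκ₀⟩ := exists_restrict hi0 ν₀
  obtain ⟨k, hk⟩ := QuotientGroup.eq.mp (hκ.trans (hx ν₀ κ₀ rfl hκ₀))
  refine ⟨ν₀ * innK k⁻¹, by rw [map_mul, mkNK_innK, mul_one]; rfl, fun m => ?_⟩
  have hκ₀κ : κ₀ = κ * MulAut.conj k := by rw [hk, mul_inv_cancel_left]
  rw [Subgroup.coe_mul, MulAut.mul_apply]
  show i0 (κ m) = (ν₀ : MulAut N) (MulAut.conj (i0 k⁻¹) (i0 m))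
  rw [MulAut.conj_apply, ← map_inv i0, ← map_mul, ← map_mul, ← hκ₀, hκ₀κ, MulAut.mul_apply,
    MulAut.conj_apply]
  group

lemma InducesOut.mul_left {π0 : N →* P} {x y : OutNK i0} {o : Out K}
    (hy : MemOutKNP i0 π0 y) (hx : InducesOut i0 x o) : InducesOut i0 (y * x) o := by
  obtain ⟨η, hηK, -, rfl⟩ := hy
  intro ν κ hν hκ
  refine hx (η⁻¹ * ν) κ (by rw [map_mul, map_inv, hν, inv_mul_cancel_left]) fun k => ?_
  calc i0 (κ k) = (η : MulAut N)⁻¹ ((η : MulAut N) (i0 (κ k))) :=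
        (MulAut.inv_apply_self _ _ _).symm
    _ = _ := by rw [hηK, hκ, Subgroup.coe_mul, Subgroup.coe_inv, MulAut.mul_apply]

lemma InducesConj.mul_left {π0 : N →* P} {jb : P →* Q} {x y : OutNK i0} {q : Q}
    (hy : MemOutKNP i0 π0 y) (hx : InducesConj i0 π0 jb x q) : InducesConj i0 π0 jb (y * x) q := by
  obtain ⟨η, -, hηπ, rfl⟩ := hy
  intro ν hν n
  have h := hx (η⁻¹ * ν) (by rw [map_mul, map_inv, hν, inv_mul_cancel_left]) n
  rwa [Subgroup.coe_mul, MulAut.mul_apply, Subgroup.coe_inv, ← hηπ, MulAut.apply_inv_self] at h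

lemma memOutKNP_mul_inv (hi0 : Function.Injective i0) {π0 : N →* P} {jb : P →* Q}
    (hjb : Function.Injective jb) {x x' : OutNK i0} {o : Out K} {q : Q}
    (hx : InducesOut i0 x o) (hx' : InducesOut i0 x' o)
    (hc : InducesConj i0 π0 jb x q) (hc' : InducesConj i0 π0 jb x' q) :
    MemOutKNP i0 π0 (x' * x⁻¹) := by
  obtain ⟨κ, rfl⟩ := QuotientGroup.mk'_surjective (Inn K) o
  -- representatives restricting to the same `κ` differ by an automorphism fixing `i0 K` pointwise
  obtain ⟨ν, hν, hκ⟩ := exists_mkNK_eq_of_inducesOut hi0 hx rfl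
  obtain ⟨ν', hν', hκ'⟩ := exists_mkNK_eq_of_inducesOut hi0 hx' rfl
  refine ⟨ν' * ν⁻¹, fun k => ?_, fun n => hjb ?_, by rw [map_mul, map_inv, hν, hν']⟩
  · obtain ⟨m, rfl⟩ := κ.surjective k
    rw [Subgroup.coe_mul, Subgroup.coe_inv, MulAut.mul_apply, hκ m, MulAut.inv_apply_self,
      ← hκ' m, hκ m]
  · have h := hc ν hν ((ν : MulAut N)⁻¹ n)
    rw [MulAut.apply_inv_self] at h
    rw [Subgroup.coe_mul, Subgroup.coe_inv, MulAut.mul_apply, hc' ν' hν', h]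

end Induced

theorem statement18_general
    {K P Q R N : Type*} [Group K] [Group P] [Group Q] [Group R] [Group N]
    (i0 : K →* N) (π0 : N →* P) (jb : P →* Q) (fb : Q →* R) (θ : Q →* Out K)
    (hi0 : Function.Injective i0)
    (hjb : Function.Injective jb) (hfb : Function.Surjective fb)
    (hker1 : jb.range = fb.ker)
    -- its mod-K outer action Θ_P
    (ΘP : P →* OutNK i0)
    -- a fixed (θ,𝒞_P^Q)-prolongation Θ of Θ_P
    (Θ : Q →* OutNK i0) (hΘ : IsProlong i0 π0 jb θ ΘP Θ) :
    -- well-definedness: each 1-cocycle Γ yields a prolongation Γ ⋄ Θ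
    (∀ Γ : R → OutNK i0, Γ 1 = 1 → (∀ r, MemOutKNP i0 π0 (Γ r)) →
      (∀ q1 q2 : Q, Γ (fb q1 * fb q2) = Γ (fb q1) * (Θ q1 * Γ (fb q2) * (Θ q1)⁻¹)) →
      ∃ Θ' : Q →* OutNK i0, (∀ q, Θ' q = Γ (fb q) * Θ q) ∧
        IsProlong i0 π0 jb θ ΘP Θ') ∧
    -- injectivity
    (∀ Γ1 Γ2 : R → OutNK i0,
      Γ1 1 = 1 → (∀ r, MemOutKNP i0 π0 (Γ1 r)) →
      (∀ q1 q2 : Q, Γ1 (fb q1 * fb q2) = Γ1 (fb q1) * (Θ q1 * Γ1 (fb q2) * (Θ q1)⁻¹)) →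
      Γ2 1 = 1 → (∀ r, MemOutKNP i0 π0 (Γ2 r)) →
      (∀ q1 q2 : Q, Γ2 (fb q1 * fb q2) = Γ2 (fb q1) * (Θ q1 * Γ2 (fb q2) * (Θ q1)⁻¹)) →
      (∀ q : Q, Γ1 (fb q) * Θ q = Γ2 (fb q) * Θ q) → Γ1 = Γ2) ∧
    -- surjectivity
    (∀ Θ' : Q →* OutNK i0, IsProlong i0 π0 jb θ ΘP Θ' →
      ∃ Γ : R → OutNK i0, Γ 1 = 1 ∧ (∀ r, MemOutKNP i0 π0 (Γ r)) ∧
        (∀ q1 q2 : Q, Γ (fb q1 * fb q2) =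
          Γ (fb q1) * (Θ q1 * Γ (fb q2) * (Θ q1)⁻¹)) ∧
        ∀ q : Q, Θ' q = Γ (fb q) * Θ q) ∧
    -- the inverse formula, for any section ū of φ̄
    (∀ (Θ' : Q →* OutNK i0) (Γ : R → OutNK i0),
      IsProlong i0 π0 jb θ ΘP Θ' →
      (∀ q : Q, Θ' q = Γ (fb q) * Θ q) →
      ∀ ub : R → Q, (∀ r, fb (ub r) = r) → ub 1 = 1 →
        ∀ r : R, Γ r = Θ' (ub r) * (Θ (ub r))⁻¹) := by
  obtain ⟨hΘP', hΘout, hΘconj⟩ := isProlong_iff.mp hΘ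
  refine ⟨fun Γ hΓ1 hΓmem hΓc => ?_, ?_, fun Θ' hΘ' => ?_, ?_⟩
  · refine ⟨cocycleTwist Θ fb Γ hΓ1 hΓc, fun q => rfl, isProlong_iff.mpr ⟨fun p => ?_,
      fun q => (hΘout q).mul_left (hΓmem _), fun q => (hΘconj q).mul_left (hΓmem _)⟩⟩
    have hp : fb (jb p) = 1 := hker1.le ⟨p, rfl⟩
    show Γ (fb (jb p)) * Θ (jb p) = ΘP p
    rw [hp, hΓ1, one_mul, hΘP']
  · intro Γ1 Γ2 _ _ _ _ _ _ h
    funext r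
    obtain ⟨q, rfl⟩ := hfb r
    exact mul_right_cancel (h q)
  · obtain ⟨hΘP'', hout', hconj'⟩ := isProlong_iff.mp hΘ'
    have hker : ∀ q ∈ fb.ker, Θ' q = Θ q := by
      intro q hq
      obtain ⟨p, rfl⟩ := hker1.ge hq
      rw [hΘP'', hΘP']
    obtain ⟨Γ, hΓ1, hΓc, hΘ'Γ⟩ := exists_cocycle_of_eqOn_ker hfb hker
    refine ⟨Γ, hΓ1, fun r => ?_, hΓc, hΘ'Γ⟩
    obtain ⟨q, rfl⟩ := hfb r
    rw [eq_mul_inv_of_mul_eq (hΘ'Γ q).symm]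
    exact memOutKNP_mul_inv hi0 hjb (hΘout q) (hout' q) (hΘconj q) (hconj' q)
  · intro Θ' Γ _ hΘ'Γ ub hub _ r
    rw [hΘ'Γ, hub, mul_inv_cancel_right]

/-- Fixing a `(θ,𝒞_P^Q)`-prolongation `Θ` of `Θ_P` and identifying
`H¹(P,Z(K))` with `Out(KNP;K) ⊆ Out(N;K)`, the map `Γ ↦ (q ↦ Γ(φ̄ q)·Θ(q))` is a
bijection from the normalized 1-cocycles `Z¹(R, H¹(P,Z(K)))` (for the `R`-action
`r·x = Θ(q)·x·Θ(q)⁻¹`, `φ̄(q) = r`) onto the set of all `(θ,𝒞_P^Q)`-prolongations of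
`Θ_P`; its inverse sends `Θ'` to `r ↦ Θ'(ū r)·Θ(ū r)⁻¹` for any section `ū` of `φ̄`. -/
theorem statement18
    {K P Q R N : Type*} [Group K] [Group P] [Group Q] [Group R] [Group N]
    (i0 : K →* N) (π0 : N →* P) (jb : P →* Q) (fb : Q →* R) (θ : Q →* Out K)
    (hi0 : Function.Injective i0) (hπ0 : Function.Surjective π0)
    (hker0 : i0.range = π0.ker)
    (hjb : Function.Injective jb) (hfb : Function.Surjective fb)
    (hker1 : jb.range = fb.ker)
    -- the extension (KNP) has outer action θ∘j̄
    (hθN : ∀ (n : N) (κ : MulAut K),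
      (∀ k, i0 (κ k) = n * i0 k * n⁻¹) → θ (jb (π0 n)) = toOut K κ)
    -- its mod-K outer action Θ_P
    (ΘP : P →* OutNK i0)
    (hΘP : ∀ (n : N) (ν : ↥(autK i0)),
      (∀ m : N, (ν : MulAut N) m = n * m * n⁻¹) → ΘP (π0 n) = mkNK i0 ν)
    -- a fixed (θ,𝒞_P^Q)-prolongation Θ of Θ_P
    (Θ : Q →* OutNK i0) (hΘ : IsProlong i0 π0 jb θ ΘP Θ) :
    -- well-definedness: each 1-cocycle Γ yields a prolongation Γ ⋄ Θ
    (∀ Γ : R → OutNK i0, Γ 1 = 1 → (∀ r, MemOutKNP i0 π0 (Γ r)) →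
      (∀ q1 q2 : Q, Γ (fb q1 * fb q2) = Γ (fb q1) * (Θ q1 * Γ (fb q2) * (Θ q1)⁻¹)) →
      ∃ Θ' : Q →* OutNK i0, (∀ q, Θ' q = Γ (fb q) * Θ q) ∧
        IsProlong i0 π0 jb θ ΘP Θ') ∧
    -- injectivity
    (∀ Γ1 Γ2 : R → OutNK i0,
      Γ1 1 = 1 → (∀ r, MemOutKNP i0 π0 (Γ1 r)) →
      (∀ q1 q2 : Q, Γ1 (fb q1 * fb q2) = Γ1 (fb q1) * (Θ q1 * Γ1 (fb q2) * (Θ q1)⁻¹)) →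
      Γ2 1 = 1 → (∀ r, MemOutKNP i0 π0 (Γ2 r)) →
      (∀ q1 q2 : Q, Γ2 (fb q1 * fb q2) = Γ2 (fb q1) * (Θ q1 * Γ2 (fb q2) * (Θ q1)⁻¹)) →
      (∀ q : Q, Γ1 (fb q) * Θ q = Γ2 (fb q) * Θ q) → Γ1 = Γ2) ∧
    -- surjectivity
    (∀ Θ' : Q →* OutNK i0, IsProlong i0 π0 jb θ ΘP Θ' →
      ∃ Γ : R → OutNK i0, Γ 1 = 1 ∧ (∀ r, MemOutKNP i0 π0 (Γ r)) ∧
        (∀ q1 q2 : Q, Γ (fb q1 * fb q2) =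
          Γ (fb q1) * (Θ q1 * Γ (fb q2) * (Θ q1)⁻¹)) ∧
        ∀ q : Q, Θ' q = Γ (fb q) * Θ q) ∧
    -- the inverse formula, for any section ū of φ̄
    (∀ (Θ' : Q →* OutNK i0) (Γ : R → OutNK i0),
      IsProlong i0 π0 jb θ ΘP Θ' →
      (∀ q : Q, Θ' q = Γ (fb q) * Θ q) →
      ∀ ub : R → Q, (∀ r, fb (ub r) = r) → ub 1 = 1 →
        ∀ r : R, Γ r = Θ' (ub r) * (Θ (ub r))⁻¹) :=
  statement18_general i0 π0 jb fb θ hi0 hjb hfb hker1 ΘP Θ hΘ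

end IES
end

section
/- Let (G,i,π) and (G',i',π') be extensions of K by Q with the same outer action θ. Let (N,i₀,π₀) and (N',i₀',π₀') be their P-subextensions (N := π⁻¹(j̄(P)), N' := π'⁻¹(j̄(P))) with inclusions j : N ↪ G and j' : N' ↪ G', let Θ : Q → Out(N;K) and Θ' : Q → Out(N';K) be the mod-K outer actions induced by the conjugation actions of G on N and of G' on N', and suppose ψ : N' → N is an isomorphism of extensions of K by P (ψ∘i₀' = i₀ and π₀∘ψ = π₀'). Then Θ and the transported action ψΘ' (defined by ψΘ'(q) := class of ψ∘Σ'∘ψ⁻¹ for any representative Σ' ∈ Aut_K(N') of Θ'(q)) are Aut(KNP)-conjugate — i.e. there exists η ∈ Aut(KNP) with ψΘ'(q) = η̄⁻¹·Θ(q)·η̄ in Out(N;K) for all q ∈ Q, where η̄ is the image of η — if and only if there exists an iterated extension (G',j*,π') of (N,i₀,π₀) by (PQR) having (G',i',π') as its Q-main extension and Θ as its mod-K outer action. -/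
/-!
Write the inclusion of `N` in `G'` as `j' ∘ e⁻¹` for an isomorphism `e : N' ≃* N`; every
iterated extension `(G', j*, π')` with main extension `(G', i', π')` arises this way, since `j*`
and `j'` are injective with the same image `ker(φ̄ ∘ π')`, and `j' ∘ e⁻¹` is one exactly when `e`
is an isomorphism of extensions of `K` by `P`, i.e. when `e = η ∘ ψ` with `η ∈ Aut(KNP)`. If
conjugation by `g'` acts on `N` through `j' ∘ e⁻¹` as `ν`, it acts on `N'` through `j'` as
`e⁻¹ ν e`, whose class is `Θ'(π' g')` and whose `ψ`-transport is `η⁻¹ ν η`. Hence `Θ` is the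
mod-`K` outer action of `j' ∘ e⁻¹` iff `ψΘ'(q) = η̄⁻¹ Θ(q) η̄` for all `q`.
-/

namespace IES

section Transport

variable {K N N' : Type*} [Group K] [Group N] [Group N'] {i0 : K →* N} {i0' : K →* N'}

lemma mem_range_iff_of_comp_eq (f : N' →* N) (hf : Function.Injective f)
    (hfi : ∀ k, f (i0' k) = i0 k) (n' : N') : f n' ∈ i0.range ↔ n' ∈ i0'.range := by
  constructor
  · rintro ⟨k, hk⟩
    exact ⟨k, hf (by rw [hfi, hk])⟩
  · rintro ⟨k, rfl⟩
    exact ⟨k, (hfi k).symm⟩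

lemma mem_autK_of_forall_apply_eq {η : MulAut N} (hη : ∀ k, η (i0 k) = i0 k) : η ∈ autK i0 :=
  mem_range_iff_of_comp_eq η.toMonoidHom η.injective hη

lemma map_congr_autK (ψ : N' ≃* N) (hψ : ∀ k, ψ (i0' k) = i0 k) :
    (autK i0').map (MulAut.congr ψ).toMonoidHom = autK i0 := by
  ext σ
  have hrange := mem_range_iff_of_comp_eq ψ.toMonoidHom ψ.injective hψ
  simp only [Subgroup.mem_map_equiv, mem_autK_iff, ψ.surjective.forall]
  refine forall_congr' fun n' => ?_
  rw [← hrange, ← hrange]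
  simp

def autKCongr (ψ : N' ≃* N) (hψ : ∀ k, ψ (i0' k) = i0 k) : autK i0' ≃* autK i0 :=
  ((MulAut.congr ψ).subgroupMap (autK i0')).trans
    (MulEquiv.subgroupCongr (map_congr_autK ψ hψ))

variable (ψ : N' ≃* N) (hψ : ∀ k, ψ (i0' k) = i0 k)

@[simp]
lemma autKCongr_apply (S' : autK i0') (n : N) :
    (autKCongr ψ hψ S' : MulAut N) n = ψ ((S' : MulAut N') (ψ.symm n)) := rfl

@[simp]
lemma autKCongr_symm_apply (ν : autK i0) (n' : N') :
    ((autKCongr ψ hψ).symm ν : MulAut N') n' = ψ.symm ((ν : MulAut N) (ψ n')) := rfl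

lemma eq_autKCongr_iff {S' : autK i0'} {ν : autK i0} :
    ν = autKCongr ψ hψ S' ↔ ∀ n', (ν : MulAut N) (ψ n') = ψ ((S' : MulAut N') n') := by
  rw [Subtype.ext_iff, MulEquiv.ext_iff, ψ.surjective.forall]
  simp

lemma cInn_le_comap_autKCongr :
    cInn i0' ≤ (cInn i0).comap (autKCongr ψ hψ).toMonoidHom := by
  rintro c ⟨k, hk⟩
  refine ⟨k, MulEquiv.ext fun n => ?_⟩
  simp [hk, MulAut.conj_apply, hψ]

/-- `outNKMap ψ hψ ∘ Θ'` is the transported action `ψΘ'`. -/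
def outNKMap : OutNK i0' →* OutNK i0 :=
  QuotientGroup.map _ _ (autKCongr ψ hψ).toMonoidHom (cInn_le_comap_autKCongr ψ hψ)

lemma outNKMap_mkNK (S' : autK i0') :
    outNKMap ψ hψ (mkNK i0' S') = mkNK i0 (autKCongr ψ hψ S') := rfl

lemma mkNK_eq_outNKMap {S' : autK i0'} {ν : autK i0}
    (hν : ∀ n', (ν : MulAut N) (ψ n') = ψ ((S' : MulAut N') n')) :
    mkNK i0 ν = outNKMap ψ hψ (mkNK i0' S') := by
  rw [outNKMap_mkNK, ← (eq_autKCongr_iff ψ hψ).2 hν]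

end Transport

section Conjugation

variable {K N N' G : Type*} [Group K] [Group N] [Group N'] [Group G]
  {i0 : K →* N} {i0' : K →* N'}

lemma conj_mem_iff {H : Subgroup G} [H.Normal] (g x : G) : g * x * g⁻¹ ∈ H ↔ x ∈ H := by
  refine ⟨fun h => ?_, fun h => Subgroup.Normal.conj_mem inferInstance x h g⟩
  simpa [mul_assoc] using Subgroup.Normal.conj_mem' inferInstance _ h g

lemma exists_autK_apply_eq_conj {i : K →* G} [i.range.Normal] {f : N →* G}
    (hf : Function.Injective f) [f.range.Normal] (hfi : f.comp i0 = i) (g : G) :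
    ∃ ν : autK i0, ∀ n, f ((ν : MulAut N) n) = g * f n * g⁻¹ := by
  let e := MonoidHom.ofInjective hf
  let ν : MulAut N := e.trans ((MulAut.conjNormal g).trans e.symm)
  have hν : ∀ n, f (ν n) = g * f n * g⁻¹ := fun n => by
    simp [ν, e, MonoidHom.apply_ofInjective_symm, MonoidHom.ofInjective_apply]
  have hrange := mem_range_iff_of_comp_eq f hf (DFunLike.congr_fun hfi)
  refine ⟨⟨ν, fun n => ?_⟩, hν⟩
  rw [← hrange, ← hrange, hν, conj_mem_iff]

lemma autKCongr_symm_apply_eq_conj (e : N' ≃* N) (he : ∀ k, e (i0' k) = i0 k)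
    {f : N →* G} {f' : N' →* G} (hf : ∀ n', f (e n') = f' n') {g : G} {ν : autK i0}
    (hν : ∀ n, f ((ν : MulAut N) n) = g * f n * g⁻¹) (n' : N') :
    f' (((autKCongr e he).symm ν : MulAut N') n') = g * f' n' * g⁻¹ := by
  rw [← hf, ← hf, autKCongr_symm_apply, e.apply_symm_apply, hν]

lemma autKCongr_autKCongr_symm (ψ e : N' ≃* N) (hψ : ∀ k, ψ (i0' k) = i0 k)
    (he : ∀ k, e (i0' k) = i0 k) {η : autK i0} (hη : ∀ n', e n' = (η : MulAut N) (ψ n'))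
    (ν : autK i0) : autKCongr ψ hψ ((autKCongr e he).symm ν) = η⁻¹ * ν * η := by
  have he_symm : ∀ n, e.symm n = ψ.symm ((η : MulAut N)⁻¹ n) := fun n =>
    e.symm_apply_eq.2 (by rw [hη]; simp)
  ext n
  simp [he_symm, hη]

end Conjugation

section Extensions

variable {K P Q N N' G' : Type*} [Group K] [Group P] [Group Q] [Group N] [Group N'] [Group G']
  {i0 : K →* N} {π0 : N →* P} {i0' : K →* N'} {π0' : N' →* P}

def IsExtEquiv (i0' : K →* N') (π0' : N' →* P) (i0 : K →* N) (π0 : N →* P) (e : N' ≃* N) :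
    Prop :=
  (∀ k, e (i0' k) = i0 k) ∧ ∀ n', π0 (e n') = π0' n'

lemma IsExtEquiv.symm {e : N' ≃* N} (he : IsExtEquiv i0' π0' i0 π0 e) :
    IsExtEquiv i0 π0 i0' π0' e.symm :=
  ⟨fun k => e.symm_apply_eq.2 (he.1 k).symm, fun n => by rw [← he.2, e.apply_symm_apply]⟩

lemma IsExtEquiv.trans {N'' : Type*} [Group N''] {i0'' : K →* N''} {π0'' : N'' →* P}
    {e : N' ≃* N} {e' : N ≃* N''} (he : IsExtEquiv i0' π0' i0 π0 e)
    (he' : IsExtEquiv i0 π0 i0'' π0'' e') : IsExtEquiv i0' π0' i0'' π0'' (e.trans e') :=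
  ⟨fun k => by simp [he.1, he'.1], fun n' => by simp [he.2, he'.2]⟩

lemma exists_mulEquiv_apply_eq_of_range_eq {f : N →* G'} {f' : N' →* G'}
    (hf : Function.Injective f) (hf' : Function.Injective f') (h : f'.range = f.range) :
    ∃ e : N' ≃* N, ∀ n', f (e n') = f' n' :=
  ⟨(MonoidHom.ofInjective hf').trans
      ((MulEquiv.subgroupCongr h).trans (MonoidHom.ofInjective hf).symm),
    fun n' => by simp [MonoidHom.apply_ofInjective_symm, MonoidHom.ofInjective_apply]⟩

variable {jb : P →* Q} {π' : G' →* Q} {i' : K →* G'} {j' : N' →* G'}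

lemma comp_symm_of_isExtEquiv {e : N' ≃* N} (he : IsExtEquiv i0' π0' i0 π0 e)
    (hj' : Function.Injective j') (hjc' : π'.comp j' = jb.comp π0') (hji' : j'.comp i0' = i') :
    Function.Injective (j'.comp e.symm.toMonoidHom) ∧
      π'.comp (j'.comp e.symm.toMonoidHom) = jb.comp π0 ∧
      (j'.comp e.symm.toMonoidHom).range = j'.range ∧
      (j'.comp e.symm.toMonoidHom).comp i0 = i' := by
  refine ⟨hj'.comp e.symm.injective, ?_, ?_, ?_⟩
  · rw [← MonoidHom.comp_assoc, hjc', MonoidHom.comp_assoc]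
    ext n
    simp [← he.symm.2 n]
  · ext g
    simp [e.symm.surjective.exists]
  · rw [MonoidHom.comp_assoc, ← hji']
    ext k
    simp [he.symm.1 k]

lemma isExtEquiv_of_comp_eq (hjb : Function.Injective jb) {jstar : N →* G'}
    (hs : Function.Injective jstar) (hsc : π'.comp jstar = jb.comp π0) (hsi : jstar.comp i0 = i')
    (hjc' : π'.comp j' = jb.comp π0') (hji' : j'.comp i0' = i') {e : N' ≃* N}
    (he : ∀ n', jstar (e n') = j' n') : IsExtEquiv i0' π0' i0 π0 e := by
  refine ⟨fun k => hs ?_, fun n' => hjb ?_⟩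
  · rw [he, ← MonoidHom.comp_apply, hji', ← hsi, MonoidHom.comp_apply]
  · rw [← MonoidHom.comp_apply, ← hsc, MonoidHom.comp_apply, he, ← MonoidHom.comp_apply, hjc',
      MonoidHom.comp_apply]

end Extensions

theorem statement19_general
    {K P Q R N N' G' : Type*} [Group K] [Group P] [Group Q] [Group R] [Group N]
    [Group N'] [Group G']
    (jb : P →* Q) (fb : Q →* R)
    (hjb : Function.Injective jb)
    -- the extension (G,i,π), its P-subextension (N,i₀,π₀) with inclusion j
    (i0 : K →* N) (π0 : N →* P)
    -- the extension (G',i',π'), its P-subextension (N',i₀',π₀') with inclusion j'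
    (i' : K →* G') (π' : G' →* Q)
    (hπ' : Function.Surjective π')
    (hker' : i'.range = π'.ker)
    (i0' : K →* N') (π0' : N' →* P)
    (j' : N' →* G') (hj' : Function.Injective j')
    (hji' : j'.comp i0' = i') (hjc' : π'.comp j' = jb.comp π0')
    (hjr' : j'.range = (fb.comp π').ker)
    -- the mod-K outer actions Θ of (G,j,π) and Θ' of (G',j',π')
    (Θ : Q →* OutNK i0)
    (Θ' : Q →* OutNK i0')
    (hΘ' : ∀ (g' : G') (ν' : ↥(autK i0')),
      (∀ n' : N', j' ((ν' : MulAut N') n') = g' * j' n' * g'⁻¹) →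
        Θ' (π' g') = mkNK i0' ν')
    -- an isomorphism ψ between the P-subextensions
    (ψ : N' ≃* N)
    (hψi : ∀ k : K, ψ (i0' k) = i0 k)
    (hψp : ∀ n' : N', π0 (ψ n') = π0' n') :
    -- Θ and the transported action ψΘ' are Aut(KNP)-conjugate ...
    (∃ η : ↥(autK i0), (∀ k : K, (η : MulAut N) (i0 k) = i0 k) ∧
        (∀ n : N, π0 ((η : MulAut N) n) = π0 n) ∧
        ∀ (q : Q) (S' : ↥(autK i0')) (ν : ↥(autK i0)),
          mkNK i0' S' = Θ' q →
          (∀ n' : N', (ν : MulAut N) (ψ n') = ψ ((S' : MulAut N') n')) →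
          mkNK i0 ν = (mkNK i0 η)⁻¹ * Θ q * mkNK i0 η) ↔
    -- ... iff there is an iterated extension (G', j*, π') of (N,i₀,π₀) by (PQR)
    -- with Q-main extension (G',i',π') and mod-K outer action Θ
    (∃ jstar : N →* G', Function.Injective jstar ∧
        π'.comp jstar = jb.comp π0 ∧
        jstar.range = (fb.comp π').ker ∧
        jstar.comp i0 = i' ∧
        ∀ (g' : G') (ν : ↥(autK i0)),
          (∀ n : N, jstar ((ν : MulAut N) n) = g' * jstar n * g'⁻¹) →
          Θ (π' g') = mkNK i0 ν) := by
  have hψ : IsExtEquiv i0' π0' i0 π0 ψ := ⟨hψi, hψp⟩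
  constructor
  · rintro ⟨η, hηK, hηP, hconj⟩
    have he : IsExtEquiv i0' π0' i0 π0 (ψ.trans (η : MulAut N)) := hψ.trans ⟨hηK, hηP⟩
    obtain ⟨hinj, hπ, hrange, hi⟩ := comp_symm_of_isExtEquiv he hj' hjc' hji'
    refine ⟨_, hinj, hπ, hrange.trans hjr', hi, fun g' ν hν => ?_⟩
    have hS' := hΘ' g' _ (autKCongr_symm_apply_eq_conj _ he.1 (fun n' => by simp) hν)
    have hν' := (autKCongr_autKCongr_symm ψ _ hψi he.1 (fun _ => rfl) ν).symm
    have hconj' := hconj _ _ _ hS'.symm ((eq_autKCongr_iff ψ hψi).1 hν')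
    rw [map_mul, map_mul, map_inv] at hconj'
    exact (mul_left_cancel (mul_right_cancel hconj')).symm
  · rintro ⟨jstar, hinj, hπ, hrange, hi, hΘstar⟩
    obtain ⟨e, hje⟩ := exists_mulEquiv_apply_eq_of_range_eq hinj hj' (hjr'.trans hrange.symm)
    have he := isExtEquiv_of_comp_eq hjb hinj hπ hi hjc' hji' hje
    obtain ⟨hηK, hηP⟩ : IsExtEquiv i0 π0 i0 π0 (ψ.symm.trans e) := hψ.symm.trans he
    let η : autK i0 := ⟨ψ.symm.trans e, mem_autK_of_forall_apply_eq hηK⟩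
    refine ⟨η, hηK, hηP, fun q S' ν hS' hν => ?_⟩
    obtain ⟨g', rfl⟩ := hπ' q
    have : i'.range.Normal := hker' ▸ inferInstance
    have : jstar.range.Normal := hrange ▸ inferInstance
    obtain ⟨ν₀, hν₀⟩ := exists_autK_apply_eq_conj hinj hi g'
    rw [mkNK_eq_outNKMap ψ hψi hν, hS', hΘ' g' _ (autKCongr_symm_apply_eq_conj e he.1 hje hν₀),
      outNKMap_mkNK, autKCongr_autKCongr_symm ψ e hψi he.1 (η := η)
        (fun n' => (congrArg e (ψ.symm_apply_apply n')).symm),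
      hΘstar g' ν₀ hν₀, map_mul, map_mul, map_inv]

/-- Let `(G,i,π)` and `(G',i',π')` be extensions of `K` by `Q`
with the same outer action `θ`, with `P`-subextensions `(N,i₀,π₀)` and `(N',i₀',π₀')`
(inclusions `j`, `j'`), mod-`K` outer actions `Θ`, `Θ'`, and let `ψ : N' ≃ N` be an
isomorphism of extensions of `K` by `P`.  Then `Θ` and the transported action `ψΘ'`
are `Aut(KNP)`-conjugate iff there exists an iterated extension `(G',j*,π')` of
`(N,i₀,π₀)` by `(PQR)` with `Q`-main extension `(G',i',π')` and mod-`K` outer action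
`Θ`. -/
theorem statement19
    {K P Q R N N' G G' : Type*} [Group K] [Group P] [Group Q] [Group R] [Group N]
    [Group N'] [Group G] [Group G']
    (jb : P →* Q) (fb : Q →* R)
    (hjb : Function.Injective jb) (hfb : Function.Surjective fb)
    (hker1 : jb.range = fb.ker)
    (θ : Q →* Out K)
    -- the extension (G,i,π), its P-subextension (N,i₀,π₀) with inclusion j
    (i : K →* G) (π : G →* Q)
    (hi : Function.Injective i) (hπ : Function.Surjective π) (hker : i.range = π.ker)
    (hθG : ∀ (g : G) (κ : MulAut K),
      (∀ k, i (κ k) = g * i k * g⁻¹) → θ (π g) = toOut K κ)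
    (i0 : K →* N) (π0 : N →* P)
    (hi0 : Function.Injective i0) (hπ0 : Function.Surjective π0)
    (hker0 : i0.range = π0.ker)
    (j : N →* G) (hj : Function.Injective j)
    (hji : j.comp i0 = i) (hjc : π.comp j = jb.comp π0)
    (hjr : j.range = (fb.comp π).ker)
    -- the extension (G',i',π'), its P-subextension (N',i₀',π₀') with inclusion j'
    (i' : K →* G') (π' : G' →* Q)
    (hi' : Function.Injective i') (hπ' : Function.Surjective π')
    (hker' : i'.range = π'.ker)
    (hθG' : ∀ (g' : G') (κ : MulAut K),
      (∀ k, i' (κ k) = g' * i' k * g'⁻¹) → θ (π' g') = toOut K κ)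
    (i0' : K →* N') (π0' : N' →* P)
    (hi0' : Function.Injective i0') (hπ0' : Function.Surjective π0')
    (hker0' : i0'.range = π0'.ker)
    (j' : N' →* G') (hj' : Function.Injective j')
    (hji' : j'.comp i0' = i') (hjc' : π'.comp j' = jb.comp π0')
    (hjr' : j'.range = (fb.comp π').ker)
    -- the mod-K outer actions Θ of (G,j,π) and Θ' of (G',j',π')
    (Θ : Q →* OutNK i0)
    (hΘ : ∀ (g : G) (ν : ↥(autK i0)),
      (∀ n : N, j ((ν : MulAut N) n) = g * j n * g⁻¹) → Θ (π g) = mkNK i0 ν)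
    (Θ' : Q →* OutNK i0')
    (hΘ' : ∀ (g' : G') (ν' : ↥(autK i0')),
      (∀ n' : N', j' ((ν' : MulAut N') n') = g' * j' n' * g'⁻¹) →
        Θ' (π' g') = mkNK i0' ν')
    -- an isomorphism ψ between the P-subextensions
    (ψ : N' ≃* N)
    (hψi : ∀ k : K, ψ (i0' k) = i0 k)
    (hψp : ∀ n' : N', π0 (ψ n') = π0' n') :
    -- Θ and the transported action ψΘ' are Aut(KNP)-conjugate ...
    (∃ η : ↥(autK i0), (∀ k : K, (η : MulAut N) (i0 k) = i0 k) ∧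
        (∀ n : N, π0 ((η : MulAut N) n) = π0 n) ∧
        ∀ (q : Q) (S' : ↥(autK i0')) (ν : ↥(autK i0)),
          mkNK i0' S' = Θ' q →
          (∀ n' : N', (ν : MulAut N) (ψ n') = ψ ((S' : MulAut N') n')) →
          mkNK i0 ν = (mkNK i0 η)⁻¹ * Θ q * mkNK i0 η) ↔
    -- ... iff there is an iterated extension (G', j*, π') of (N,i₀,π₀) by (PQR)
    -- with Q-main extension (G',i',π') and mod-K outer action Θ
    (∃ jstar : N →* G', Function.Injective jstar ∧
        π'.comp jstar = jb.comp π0 ∧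
        jstar.range = (fb.comp π').ker ∧
        jstar.comp i0 = i' ∧
        ∀ (g' : G') (ν : ↥(autK i0)),
          (∀ n : N, jstar ((ν : MulAut N) n) = g' * jstar n * g'⁻¹) →
          Θ (π' g') = mkNK i0 ν) :=
  statement19_general jb fb hjb i0 π0 i' π' hπ' hker' i0' π0' j' hj' hji' hjc' hjr' Θ Θ' hΘ' ψ hψi
    hψp

end IES
end
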